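/- arXiv:1604.05809 — 3 statements merged into one kernel-verified Lean document; each statement's English description precedes it below -/
import Mathlib

section
/- Assume C₀ := sup_{x∈Λ} Σ_{y∈Λ} Σ_{Z⊆Λ: x,y∈Z} ‖h_Z‖ < ∞ and set v = 2eC₀. Then for every R > 0, every A ∈ 𝒜_X and B ∈ 𝒜_Y with X, Y ⊆ Λ and d(X,Y) > 0, and every t ≥ 0: ‖[τ^{(<R)}_{t,Λ}(A), B]‖ ≤ 2‖A‖‖B‖|X| exp(vt − d(X,Y)/R). -/
noncomputable section

open Complex

variable {Ω : Type*} [MetricSpace Ω]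
variable {H : Type*} [NormedAddCommGroup H] [InnerProductSpace ℂ H] [CompleteSpace H]

/-- The commutator `[A,B] = AB - BA` of two bounded operators. -/
def opComm (A B : H →L[ℂ] H) : H →L[ℂ] H := A * B - B * A

/-- The Heisenberg evolution `e^{itK} A e^{-itK}` generated by a bounded operator `K`. -/
def heis (K : H →L[ℂ] H) (t : ℝ) (A : H →L[ℂ] H) : H →L[ℂ] H :=
  NormedSpace.exp ((I * t) • K) * A * NormedSpace.exp ((-(I * t)) • K)

/-- The diameter of a finite subset of a metric space. -/
def fdiam (Z : Finset Ω) : ℝ := Metric.diam (Z : Set Ω)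

/-- The distance `d(X,Y) = min {d(x,y) : x ∈ X, y ∈ Y}` between two finite sets. -/
def fsetDist (X Y : Finset Ω) : ℝ := sInf (Set.image2 dist (X : Set Ω) (Y : Set Ω))

/-- The short-range part `h_Z^{(<R)}` of the interaction: `h_Z` if `diam Z < R`, else `0`. -/
def hlt (h : Finset Ω → (H →L[ℂ] H)) (R : ℝ) (Z : Finset Ω) : H →L[ℂ] H :=
  if fdiam Z < R then h Z else 0

/-- The long-range part `h_Z^{(≥R)} = h_Z - h_Z^{(<R)}`. -/
def hge (h : Finset Ω → (H →L[ℂ] H)) (R : ℝ) (Z : Finset Ω) : H →L[ℂ] H :=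
  h Z - hlt h R Z

/-- The Hamiltonian `H_Λ = ∑_{Z ⊆ Λ} h_Z`. -/
def Ham (Λ : Finset Ω) (h : Finset Ω → (H →L[ℂ] H)) : H →L[ℂ] H :=
  ∑ Z ∈ Λ.powerset, h Z

/-- The `r`-neighborhood `X̃_r = {z ∈ Λ : d(z,X) ≤ r}` of `X` inside `Λ`. -/
def nbhd (Λ X : Finset Ω) (r : ℝ) : Finset Ω :=
  Λ.filter fun z => ∃ x ∈ X, dist z x ≤ r

/-
For `A ∈ 𝒜_Z`, the terms of `H^{(<R)}` that do not meet `Z` commute with `A`, so in the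
interaction picture Duhamel's formula gives
`‖[τ_t(A), B]‖ ≤ ‖[A, B]‖ + 2‖A‖ ∫₀ᵗ ‖[τ_s(H_Z), B]‖ ds`, where `H_Z` is the sum of the terms `h_W`
meeting `Z`. If `Z` is more than `nR` away from `Y`, then `[A, B] = 0` and every such `W`, having
diameter `< R`, is more than `(n - 1)R` away from `Y`. Induction on `n`, with
`∑_{W ∩ Z ≠ ∅} ‖h_W‖ |W| ≤ C₀ |Z|` at each step, gives
`‖[τ_t(A), B]‖ ≤ 2‖A‖‖B‖|Z| (2C₀t)^{n+1}/(n+1)!`; take `n + 1 = ⌈d(X,Y)/R⌉` and use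
`x^N/N! ≤ e^{ex - N}`.
-/

open NormedSpace
open scoped Nat

lemma norm_mul_sub_mul_le {R : Type*} [NormedRing R] (x y : R) :
    ‖x * y - y * x‖ ≤ 2 * ‖x‖ * ‖y‖ := by
  calc ‖x * y - y * x‖ ≤ ‖x‖ * ‖y‖ + ‖y‖ * ‖x‖ :=
        (norm_sub_le _ _).trans (add_le_add (norm_mul_le _ _) (norm_mul_le _ _))
    _ = 2 * ‖x‖ * ‖y‖ := by ring

lemma lie_lie_of_commute {R : Type*} [Ring R] {k a : R} (h : Commute k a) (d : R) :
    ⁅k, ⁅a, d⁆⁆ = ⁅a, ⁅k, d⁆⁆ := by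
  simp only [Ring.lie_def, mul_sub, sub_mul, ← mul_assoc, h.eq]
  rw [mul_assoc d a k, ← h.eq, ← mul_assoc]
  abel

section Heisenberg

-- The `NormedSpace.exp` API (`exp_add_of_commute`, ...) is stated for normed `ℚ`-algebras.
local instance : NormedAlgebra ℚ (H →L[ℂ] H) := NormedAlgebra.restrictScalars ℚ ℂ _

variable (K : H →L[ℂ] H)

lemma heis_eq_exp (t : ℝ) (x : H →L[ℂ] H) :
    heis K t x = exp (t • (I • K)) * x * exp (t • -(I • K)) := by
  simp only [heis, smul_neg, neg_smul, ← Complex.coe_smul, smul_smul, mul_comm]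

lemma exp_smul_mul_exp_smul (a b : ℝ) (L : H →L[ℂ] H) :
    exp (a • L) * exp (b • L) = exp ((a + b) • L) := by
  rw [add_smul, exp_add_of_commute (((Commute.refl L).smul_left a).smul_right b)]

lemma exp_smul_mul_exp_smul_neg (t : ℝ) (L : H →L[ℂ] H) : exp (t • L) * exp (t • -L) = 1 := by
  rw [smul_neg, ← exp_add_of_commute (Commute.refl _).neg_right, add_neg_cancel,
    NormedSpace.exp_zero]

lemma exp_smul_neg_mul_exp_smul (t : ℝ) (L : H →L[ℂ] H) : exp (t • -L) * exp (t • L) = 1 := by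
  rw [smul_neg, ← exp_add_of_commute (Commute.refl _).neg_left, neg_add_cancel,
    NormedSpace.exp_zero]

lemma heis_mul (t : ℝ) (x y : H →L[ℂ] H) : heis K t (x * y) = heis K t x * heis K t y := by
  simp only [heis_eq_exp, mul_assoc]
  rw [← mul_assoc (exp (t • -(I • K))), exp_smul_neg_mul_exp_smul, one_mul]

lemma heis_opComm (t : ℝ) (x y : H →L[ℂ] H) :
    heis K t (opComm x y) = opComm (heis K t x) (heis K t y) := by
  rw [opComm, opComm, ← heis_mul, ← heis_mul]
  simp only [heis, mul_sub, sub_mul]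

lemma heis_smul (t : ℝ) (c : ℂ) (x : H →L[ℂ] H) : heis K t (c • x) = c • heis K t x := by
  simp only [heis, mul_smul_comm, smul_mul_assoc]

lemma heis_self (t : ℝ) : heis K t K = K := by
  rw [heis_eq_exp, (((Commute.refl K).smul_left I).smul_left t).exp_left.eq, mul_assoc,
    exp_smul_mul_exp_smul_neg, mul_one]

lemma heis_heis (s t : ℝ) (x : H →L[ℂ] H) : heis K s (heis K t x) = heis K (s + t) x := by
  simp only [heis_eq_exp, mul_assoc]
  rw [← mul_assoc (NormedSpace.exp (s • _)), exp_smul_mul_exp_smul, exp_smul_mul_exp_smul,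
    add_comm t s]

@[simp]
lemma heis_zero (x : H →L[ℂ] H) : heis K 0 x = x := by
  simp [heis]

lemma norm_heis (hK : IsSelfAdjoint K) (t : ℝ) (x : H →L[ℂ] H) : ‖heis K t x‖ = ‖x‖ := by
  have hskew : t • (I • K) ∈ skewAdjoint (H →L[ℂ] H) := by
    rw [skewAdjoint.mem_iff, star_smul, star_smul, hK.star_eq]
    simp
  have hskew' : t • -(I • K) ∈ skewAdjoint (H →L[ℂ] H) := smul_neg t (I • K) ▸ neg_mem hskew
  rw [heis_eq_exp, CStarRing.norm_mul_mem_unitary _ (exp_mem_unitary_of_mem_skewAdjoint hskew'),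
    CStarRing.norm_mem_unitary_mul _ (exp_mem_unitary_of_mem_skewAdjoint hskew)]

lemma hasDerivAt_heis {f : ℝ → H →L[ℂ] H} {f' : H →L[ℂ] H} {s : ℝ} (hf : HasDerivAt f f' s) :
    HasDerivAt (fun r => heis K r (f r)) (heis K s (f' + I • opComm K (f s))) s := by
  simp only [heis_eq_exp]
  refine (((hasDerivAt_exp_smul_const' (I • K) s).mul hf).mul
    (hasDerivAt_exp_smul_const (-(I • K)) s)).congr_deriv ?_
  have hK : ∀ c : ℂ, Commute K (NormedSpace.exp (s • c • K)) := fun c =>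
    (((Commute.refl K).smul_right c).smul_right s).exp_right
  rw [← neg_smul]
  simp only [opComm, Pi.mul_apply, ← (hK (-I)).eq, add_mul, mul_add, mul_sub, sub_mul, smul_sub,
    smul_mul_assoc, mul_smul_comm, mul_assoc, (hK I).eq]
  module

lemma hasDerivAt_heis_neg (B : H →L[ℂ] H) (s : ℝ) :
    HasDerivAt (fun r => heis K (-r) B) (-(I • opComm K (heis K (-s) B))) s := by
  have := (hasDerivAt_heis K (hasDerivAt_const (-s) B)).scomp s (hasDerivAt_neg s)
  simp only [Function.comp_def, zero_add, neg_one_smul, heis_smul, heis_opComm, heis_self] at this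
  exact this

@[fun_prop]
lemma continuous_heis {f : ℝ → H →L[ℂ] H} (hf : Continuous f) :
    Continuous fun r => heis K r (f r) := by
  simp only [heis_eq_exp]
  fun_prop

lemma continuous_opComm_heis (x B : H →L[ℂ] H) : Continuous fun s => opComm (heis K s x) B := by
  simp only [opComm]
  fun_prop

end Heisenberg

/-- Conjugating by the evolution of `K'` removes `K'` from the derivative, as `[K', A] = 0`. -/
lemma hasDerivAt_heis_opComm_heis_neg {K K' A : H →L[ℂ] H} (hA : Commute K' A) (B : H →L[ℂ] H)
    (s : ℝ) :
    HasDerivAt (fun r => heis K' r (opComm A (heis K (-r) B)))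
      (heis K' s (-I • opComm A (opComm (K - K') (heis K (-s) B)))) s := by
  have hD := hasDerivAt_heis_neg K B s
  refine (hasDerivAt_heis K' ((hD.const_mul A).sub (hD.mul_const A))).congr_deriv ?_
  have hJ := lie_lie_of_commute hA (heis K (-s) B)
  simp only [Ring.lie_def] at hJ
  simp only [Pi.sub_apply, opComm, hJ]
  congr 1
  simp only [mul_sub, sub_mul, mul_neg, neg_mul, smul_sub, mul_smul_comm, smul_mul_assoc,
    mul_assoc]
  module

lemma norm_opComm_heis_le_add_integral {K K' : H →L[ℂ] H} (hK : IsSelfAdjoint K)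
    (hK' : IsSelfAdjoint K') {A : H →L[ℂ] H} (hA : Commute K' A) (B : H →L[ℂ] H) {t : ℝ}
    (ht : 0 ≤ t) :
    ‖opComm (heis K t A) B‖ ≤
      ‖opComm A B‖ + ∫ s in (0 : ℝ)..t, 2 * ‖A‖ * ‖opComm (heis K s (K - K')) B‖ := by
  set u : ℝ → H →L[ℂ] H := fun s => heis K' s (opComm A (heis K (-s) B))
  set u' : ℝ → H →L[ℂ] H := fun s =>
    heis K' s (-I • opComm A (opComm (K - K') (heis K (-s) B)))
  have hu : ∀ s, HasDerivAt u (u' s) s := hasDerivAt_heis_opComm_heis_neg hA B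
  have hu'_cont : Continuous u' := continuous_heis K' (by simp only [opComm]; fun_prop)
  have hg : Continuous fun s => 2 * ‖A‖ * ‖opComm (heis K s (K - K')) B‖ :=
    continuous_const.mul (continuous_opComm_heis K _ B).norm
  have hu'_le : ∀ s, ‖u' s‖ ≤ 2 * ‖A‖ * ‖opComm (heis K s (K - K')) B‖ := fun s => by
    have hB : heis K s (heis K (-s) B) = B := by rw [heis_heis, add_neg_cancel, heis_zero]
    calc ‖u' s‖ = ‖opComm A (opComm (K - K') (heis K (-s) B))‖ := by
          rw [norm_heis K' hK', norm_smul, norm_neg, norm_I, one_mul]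
      _ ≤ 2 * ‖A‖ * ‖opComm (K - K') (heis K (-s) B)‖ := norm_mul_sub_mul_le _ _
      _ = 2 * ‖A‖ * ‖opComm (heis K s (K - K')) B‖ := by
          rw [← norm_heis K hK s (opComm (K - K') _), heis_opComm, hB]
  have hFTC : ∫ s in (0 : ℝ)..t, u' s = u t - u 0 :=
    intervalIntegral.integral_eq_sub_of_hasDerivAt (fun s _ => hu s)
      (hu'_cont.intervalIntegrable 0 t)
  have hut : ‖u t‖ = ‖opComm (heis K t A) B‖ := by
    rw [norm_heis K' hK', ← norm_heis K hK t, heis_opComm, heis_heis, add_neg_cancel, heis_zero]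
  have hu0 : u 0 = opComm A B := by simp [u]
  calc ‖opComm (heis K t A) B‖ = ‖u 0 + ∫ s in (0 : ℝ)..t, u' s‖ := by
        rw [hFTC, add_sub_cancel, hut]
    _ ≤ ‖u 0‖ + ‖∫ s in (0 : ℝ)..t, u' s‖ := norm_add_le _ _
    _ ≤ _ := by
        rw [hu0]
        gcongr
        exact intervalIntegral.norm_integral_le_of_norm_le ht
          (MeasureTheory.ae_of_all _ fun s _ => hu'_le s) (hg.intervalIntegrable 0 t)

lemma sum_filter_not_disjoint_le {α : Type*} [DecidableEq α] (P : Finset (Finset α))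
    (Z : Finset α) {f : Finset α → ℝ} (hf : ∀ W, 0 ≤ f W) :
    ∑ W ∈ P.filter (fun W => ¬Disjoint W Z), f W ≤
      ∑ x ∈ Z, ∑ W ∈ P.filter (fun W => x ∈ W), f W := by
  rw [Finset.sum_comm' (t' := P.filter fun W => ¬Disjoint W Z)
    (s' := fun W => Z.filter (· ∈ W))]
  · refine Finset.sum_le_sum fun W hW => ?_
    obtain ⟨x, hxW, hxZ⟩ := Finset.not_disjoint_iff.mp (Finset.mem_filter.mp hW).2
    rw [Finset.sum_const, nsmul_eq_mul]
    refine le_mul_of_one_le_left (hf W) ?_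
    exact_mod_cast Finset.card_pos.mpr ⟨x, Finset.mem_filter.mpr ⟨hxZ, hxW⟩⟩
  · intro x W
    simp only [Finset.mem_filter, Finset.not_disjoint_iff]
    exact ⟨fun ⟨hx, hW, hxW⟩ => ⟨⟨hx, hxW⟩, hW, x, hxW, hx⟩,
      fun ⟨⟨hx, hxW⟩, hW, _⟩ => ⟨hx, hW, hxW⟩⟩

lemma sum_filter_mem_mul_card {α : Type*} [DecidableEq α] (Λ : Finset α) (x : α)
    (w : Finset α → ℝ) :
    ∑ W ∈ Λ.powerset.filter (fun W => x ∈ W), w W * W.card =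
      ∑ y ∈ Λ, ∑ W ∈ Λ.powerset.filter (fun W => x ∈ W ∧ y ∈ W), w W := by
  rw [Finset.sum_comm' (t' := Λ.powerset.filter fun W => x ∈ W) (s' := fun W => W)]
  · simp [mul_comm]
  · intro y W
    simp only [Finset.mem_filter, Finset.mem_powerset]
    exact ⟨fun ⟨_, hW, hx, hy⟩ => ⟨hy, hW, hx⟩, fun ⟨hy, hW, hx⟩ => ⟨hW hy, hW, hx, hy⟩⟩

lemma sum_filter_not_disjoint_mul_card_le {α : Type*} [DecidableEq α] {Λ Z : Finset α}
    (hZ : Z ⊆ Λ) {w : Finset α → ℝ} (hw : ∀ W, 0 ≤ w W) {C₀ : ℝ}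
    (hC₀ : ∀ x ∈ Λ, ∑ y ∈ Λ, ∑ W ∈ Λ.powerset.filter (fun W => x ∈ W ∧ y ∈ W), w W ≤ C₀) :
    ∑ W ∈ Λ.powerset.filter (fun W => ¬Disjoint W Z), w W * W.card ≤ C₀ * Z.card := by
  calc _ ≤ ∑ x ∈ Z, ∑ W ∈ Λ.powerset.filter (fun W => x ∈ W), w W * W.card :=
        sum_filter_not_disjoint_le _ _ fun W => mul_nonneg (hw W) W.card.cast_nonneg
    _ ≤ ∑ _x ∈ Z, C₀ := Finset.sum_le_sum fun x hx => by
        rw [sum_filter_mem_mul_card]; exact hC₀ x (hZ hx)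
    _ = C₀ * Z.card := by rw [Finset.sum_const, nsmul_eq_mul, mul_comm]

lemma integral_mul_pow_div_factorial (a t : ℝ) (n : ℕ) :
    ∫ s in (0 : ℝ)..t, a * ((a * s) ^ n / n !) = (a * t) ^ (n + 1) / (n + 1)! := by
  simp only [mul_pow, mul_div_right_comm _ (_ ^ n), ← mul_assoc]
  rw [intervalIntegral.integral_const_mul, integral_pow, Nat.factorial_succ]
  push_cast
  field_simp
  ring

lemma pow_div_factorial_le_exp_mul_sub {x : ℝ} (hx : 0 ≤ x) (n : ℕ) :
    x ^ n / n ! ≤ Real.exp (Real.exp 1 * x - n) := by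
  have h := Real.pow_div_factorial_le_exp _ (mul_nonneg (Real.exp_pos 1).le hx) n
  rw [Real.exp_sub, ← Real.exp_one_pow, le_div_iff₀ (by positivity)]
  calc x ^ n / n ! * Real.exp 1 ^ n = (Real.exp 1 * x) ^ n / n ! := by ring
    _ ≤ _ := h

lemma fsetDist_le {X Y : Finset Ω} {x y : Ω} (hx : x ∈ X) (hy : y ∈ Y) :
    fsetDist X Y ≤ dist x y :=
  csInf_le ⟨0, by rintro _ ⟨_, _, _, _, rfl⟩; exact dist_nonneg⟩ ⟨x, hx, y, hy, rfl⟩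

lemma nonempty_left_of_fsetDist_pos {X Y : Finset Ω} (h : 0 < fsetDist X Y) : X.Nonempty := by
  rw [Finset.nonempty_iff_ne_empty]
  rintro rfl
  simp [fsetDist] at h

lemma dist_le_fdiam {Z : Finset Ω} {x y : Ω} (hx : x ∈ Z) (hy : y ∈ Z) : dist x y ≤ fdiam Z :=
  Metric.dist_le_diam_of_mem Z.finite_toSet.isBounded hx hy

lemma disjoint_of_lt_dist {Y Z : Finset Ω} {r : ℝ} (hr : 0 ≤ r)
    (hZ : ∀ z ∈ Z, ∀ y ∈ Y, r < dist z y) : Disjoint Z Y :=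
  Finset.disjoint_left.mpr fun z hz hzY => by
    have := hZ z hz z hzY
    rw [dist_self] at this
    linarith

lemma lt_dist_of_not_disjoint {Y Z W : Finset Ω} {r R : ℝ}
    (hZ : ∀ z ∈ Z, ∀ y ∈ Y, r + R < dist z y) (hW : fdiam W < R) (hWZ : ¬Disjoint W Z) :
    ∀ w ∈ W, ∀ y ∈ Y, r < dist w y := by
  obtain ⟨z, hzW, hzZ⟩ := Finset.not_disjoint_iff.mp hWZ
  intro w hw y hy
  have := dist_triangle z w y
  linarith [hZ z hzZ y hy, dist_le_fdiam hzW hw]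

section LiebRobinson

variable [DecidableEq Ω]

lemma norm_opComm_heis_sum_hlt_le {Λ Z : Finset Ω} (hZ : Z ⊆ Λ) {h : Finset Ω → H →L[ℂ] H}
    {C₀ : ℝ} (hC₀ : ∀ x ∈ Λ, ∑ y ∈ Λ,
      ∑ Z ∈ Λ.powerset.filter (fun Z => x ∈ Z ∧ y ∈ Z), ‖h Z‖ ≤ C₀)
    (R : ℝ) {K B : H →L[ℂ] H} {s c : ℝ} (hc : 0 ≤ c)
    (hbound : ∀ W ⊆ Λ, ¬Disjoint W Z → fdiam W < R →
      ‖opComm (heis K s (h W)) B‖ ≤ 2 * ‖h W‖ * ‖B‖ * W.card * c) :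
    ‖opComm (heis K s (∑ W ∈ Λ.powerset.filter fun W => ¬Disjoint W Z, hlt h R W)) B‖ ≤
      2 * ‖B‖ * c * (C₀ * Z.card) := by
  set S := Λ.powerset.filter fun W => ¬Disjoint W Z
  have hterm : ∀ W ∈ S, ‖opComm (heis K s (hlt h R W)) B‖ ≤
      2 * ‖B‖ * c * (‖hlt h R W‖ * W.card) := fun W hW => by
    obtain ⟨hWΛ, hWZ⟩ := Finset.mem_filter.mp hW
    unfold hlt; split_ifs with hdiam
    · exact (hbound W (Finset.mem_powerset.mp hWΛ) hWZ hdiam).trans_eq (by ring)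
    · simp [heis, opComm]
  have hweights : ∑ W ∈ S, ‖hlt h R W‖ * W.card ≤ C₀ * Z.card := by
    refine sum_filter_not_disjoint_mul_card_le hZ (fun W => norm_nonneg _) fun x hx => ?_
    refine le_trans (Finset.sum_le_sum fun y _ => Finset.sum_le_sum fun W _ => ?_) (hC₀ x hx)
    unfold hlt; split_ifs <;> simp
  calc _ ≤ ∑ W ∈ S, ‖opComm (heis K s (hlt h R W)) B‖ := by
        simp only [heis, opComm, Finset.mul_sum, Finset.sum_mul, ← Finset.sum_sub_distrib]
        exact norm_sum_le _ _
    _ ≤ ∑ W ∈ S, 2 * ‖B‖ * c * (‖hlt h R W‖ * W.card) := Finset.sum_le_sum hterm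
    _ = 2 * ‖B‖ * c * ∑ W ∈ S, ‖hlt h R W‖ * W.card := (Finset.mul_sum ..).symm
    _ ≤ 2 * ‖B‖ * c * (C₀ * Z.card) := by gcongr

lemma norm_opComm_heis_le_succ_of_commute {Λ : Finset Ω}
    {𝓐 : Finset Ω → Subalgebra ℂ (H →L[ℂ] H)}
    (hloc : ∀ S S' : Finset Ω, Disjoint S S' → ∀ a ∈ 𝓐 S, ∀ b ∈ 𝓐 S', a * b = b * a)
    {h : Finset Ω → H →L[ℂ] H} (hmem : ∀ Z : Finset Ω, Z ⊆ Λ → h Z ∈ 𝓐 Z)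
    (hsa : ∀ Z : Finset Ω, IsSelfAdjoint (h Z)) {C₀ : ℝ}
    (hC₀ : ∀ x ∈ Λ, ∑ y ∈ Λ,
      ∑ Z ∈ Λ.powerset.filter (fun Z => x ∈ Z ∧ y ∈ Z), ‖h Z‖ ≤ C₀)
    (hC₀nn : 0 ≤ C₀) (R : ℝ) {Z : Finset Ω} (hZ : Z ⊆ Λ) {A B : H →L[ℂ] H} (hA : A ∈ 𝓐 Z)
    (hAB : Commute A B) (n : ℕ)
    (hIH : ∀ W ⊆ Λ, ¬Disjoint W Z → fdiam W < R → ∀ s, 0 ≤ s →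
      ‖opComm (heis (Ham Λ (hlt h R)) s (h W)) B‖ ≤
        2 * ‖h W‖ * ‖B‖ * W.card * ((2 * C₀ * s) ^ n / n !))
    {t : ℝ} (ht : 0 ≤ t) :
    ‖opComm (heis (Ham Λ (hlt h R)) t A) B‖ ≤
      2 * ‖A‖ * ‖B‖ * Z.card * ((2 * C₀ * t) ^ (n + 1) / (n + 1)!) := by
  set K := Ham Λ (hlt h R)
  set S := Λ.powerset.filter fun W => ¬Disjoint W Z
  set K' := ∑ W ∈ Λ.powerset.filter (fun W => Disjoint W Z), hlt h R W
  have hlt_sa : ∀ W, IsSelfAdjoint (hlt h R W) := fun W => by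
    unfold hlt; split_ifs
    exacts [hsa W, .zero _]
  have hK'A : Commute K' A := Commute.sum_left _ _ _ fun W hW => by
    obtain ⟨hWΛ, hWZ⟩ := Finset.mem_filter.mp hW
    unfold hlt; split_ifs
    exacts [hloc W Z hWZ _ (hmem W (Finset.mem_powerset.mp hWΛ)) A hA, Commute.zero_left A]
  have hKK' : K - K' = ∑ W ∈ S, hlt h R W := by
    rw [sub_eq_iff_eq_add']
    exact (Finset.sum_filter_add_sum_filter_not Λ.powerset (fun W => Disjoint W Z) (hlt h R)).symm
  have hlocal : ∀ s, 0 ≤ s → ‖opComm (heis K s (K - K')) B‖ ≤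
      2 * ‖B‖ * ((2 * C₀ * s) ^ n / n !) * (C₀ * Z.card) := fun s hs => by
    rw [hKK']
    exact norm_opComm_heis_sum_hlt_le hZ hC₀ R (by positivity) fun W hW hWZ hdiam =>
      hIH W hW hWZ hdiam s hs
  have hK : IsSelfAdjoint K := isSelfAdjoint_sum _ fun W _ => hlt_sa W
  have hK' : IsSelfAdjoint K' := isSelfAdjoint_sum _ fun W _ => hlt_sa W
  calc ‖opComm (heis K t A) B‖
      ≤ ‖opComm A B‖ + ∫ s in (0 : ℝ)..t, 2 * ‖A‖ * ‖opComm (heis K s (K - K')) B‖ :=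
        norm_opComm_heis_le_add_integral hK hK' hK'A B ht
    _ ≤ ∫ s in (0 : ℝ)..t, 2 * ‖A‖ * ‖B‖ * Z.card * (2 * C₀ * ((2 * C₀ * s) ^ n / n !)) := by
        rw [opComm, hAB.eq, sub_self, norm_zero, zero_add]
        refine intervalIntegral.integral_mono_on ht ?_ ?_ fun s hs => ?_
        · exact (continuous_const.mul
            (continuous_opComm_heis K (K - K') B).norm).intervalIntegrable 0 t
        · exact Continuous.intervalIntegrable (by fun_prop) 0 t
        · exact (mul_le_mul_of_nonneg_left (hlocal s hs.1) (by positivity)).trans_eq (by ring)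
    _ = _ := by rw [intervalIntegral.integral_const_mul, integral_mul_pow_div_factorial]

lemma norm_opComm_heis_le_of_lt_dist {Λ : Finset Ω} {𝓐 : Finset Ω → Subalgebra ℂ (H →L[ℂ] H)}
    (hloc : ∀ S S' : Finset Ω, Disjoint S S' → ∀ a ∈ 𝓐 S, ∀ b ∈ 𝓐 S', a * b = b * a)
    {h : Finset Ω → H →L[ℂ] H} (hmem : ∀ Z : Finset Ω, Z ⊆ Λ → h Z ∈ 𝓐 Z)
    (hsa : ∀ Z : Finset Ω, IsSelfAdjoint (h Z)) {C₀ : ℝ}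
    (hC₀ : ∀ x ∈ Λ, ∑ y ∈ Λ,
      ∑ Z ∈ Λ.powerset.filter (fun Z => x ∈ Z ∧ y ∈ Z), ‖h Z‖ ≤ C₀)
    (hC₀nn : 0 ≤ C₀) {R : ℝ} (hR : 0 < R) {Y : Finset Ω} {B : H →L[ℂ] H} (hB : B ∈ 𝓐 Y)
    (n : ℕ) :
    ∀ Z ⊆ Λ, (∀ z ∈ Z, ∀ y ∈ Y, n * R < dist z y) → ∀ A ∈ 𝓐 Z, ∀ t : ℝ, 0 ≤ t →
      ‖opComm (heis (Ham Λ (hlt h R)) t A) B‖ ≤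
        2 * ‖A‖ * ‖B‖ * Z.card * ((2 * C₀ * t) ^ (n + 1) / (n + 1)!) := by
  set K := Ham Λ (hlt h R)
  have hK : IsSelfAdjoint K := isSelfAdjoint_sum _ fun W _ => by
    unfold hlt; split_ifs
    exacts [hsa W, .zero _]
  induction n with
  | zero =>
    intro Z hZ hsep A hA t ht
    refine norm_opComm_heis_le_succ_of_commute hloc hmem hsa hC₀ hC₀nn R hZ hA
      (hloc Z Y (disjoint_of_lt_dist (by positivity) hsep) A hA B hB) 0
      (fun W _ hWZ _ s _ => ?_) ht
    obtain ⟨w, hw, -⟩ := Finset.not_disjoint_iff.mp hWZ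
    have hcard : (1 : ℝ) ≤ W.card := by exact_mod_cast Finset.card_pos.mpr ⟨w, hw⟩
    calc ‖opComm (heis K s (h W)) B‖ ≤ 2 * ‖h W‖ * ‖B‖ :=
          (norm_mul_sub_mul_le _ _).trans_eq (by rw [norm_heis K hK])
      _ ≤ 2 * ‖h W‖ * ‖B‖ * W.card * ((2 * C₀ * s) ^ 0 / (0 ! : ℝ)) := by
          simp only [pow_zero, Nat.factorial_zero, Nat.cast_one, div_one, mul_one]
          exact le_mul_of_one_le_right (by positivity) hcard
  | succ n ih =>
    intro Z hZ hsep A hA t ht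
    refine norm_opComm_heis_le_succ_of_commute hloc hmem hsa hC₀ hC₀nn R hZ hA
      (hloc Z Y (disjoint_of_lt_dist (by positivity) hsep) A hA B hB) (n + 1)
      (fun W hW hWZ hdiam s hs => ih W hW ?_ (h W) (hmem W hW) s hs) ht
    refine lt_dist_of_not_disjoint (fun z hz y hy => ?_) hdiam hWZ
    have := hsep z hz y hy
    push_cast at this
    linarith

end LiebRobinson

theorem statement_2_general
    {Ω : Type*} [MetricSpace Ω] [DecidableEq Ω]
    {H : Type*} [NormedAddCommGroup H] [InnerProductSpace ℂ H] [CompleteSpace H]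
    (Λ : Finset Ω) (𝓐 : Finset Ω → Subalgebra ℂ (H →L[ℂ] H))
    (hloc : ∀ S S' : Finset Ω, Disjoint S S' →
      ∀ a ∈ 𝓐 S, ∀ b ∈ 𝓐 S', a * b = b * a)
    (h : Finset Ω → (H →L[ℂ] H))
    (hmem : ∀ Z : Finset Ω, Z ⊆ Λ → h Z ∈ 𝓐 Z)
    (hsa : ∀ Z : Finset Ω, IsSelfAdjoint (h Z))
    (C₀ : ℝ)
    (hC₀ : ∀ x ∈ Λ, ∑ y ∈ Λ,
      ∑ Z ∈ Λ.powerset.filter (fun Z => x ∈ Z ∧ y ∈ Z), ‖h Z‖ ≤ C₀)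
    (R : ℝ) (hR : 0 < R)
    (X Y : Finset Ω) (hXΛ : X ⊆ Λ) (hXY : 0 < fsetDist X Y)
    (A B : H →L[ℂ] H) (hA : A ∈ 𝓐 X) (hB : B ∈ 𝓐 Y)
    (t : ℝ) (ht : 0 ≤ t) :
    ‖opComm (heis (Ham Λ (hlt h R)) t A) B‖ ≤
      2 * ‖A‖ * ‖B‖ * X.card *
        Real.exp (2 * Real.exp 1 * C₀ * t - fsetDist X Y / R) := by
  obtain ⟨x, hx⟩ := nonempty_left_of_fsetDist_pos hXY
  have hC₀nn : 0 ≤ C₀ := (Finset.sum_nonneg fun _ _ =>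
    Finset.sum_nonneg fun _ _ => norm_nonneg _).trans (hC₀ x (hXΛ hx))
  have hdR : 0 < fsetDist X Y / R := div_pos hXY hR
  obtain ⟨n, hn⟩ := Nat.exists_eq_add_one_of_ne_zero (Nat.ceil_pos.mpr hdR).ne'
  have hsep : ∀ x ∈ X, ∀ y ∈ Y, n * R < dist x y := fun x hx y hy => by
    have hceil := Nat.ceil_lt_add_one hdR.le
    rw [hn, Nat.cast_add_one, add_lt_add_iff_right, lt_div_iff₀ hR] at hceil
    exact hceil.trans_le (fsetDist_le hx hy)
  calc ‖opComm (heis (Ham Λ (hlt h R)) t A) B‖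
      ≤ 2 * ‖A‖ * ‖B‖ * X.card * ((2 * C₀ * t) ^ (n + 1) / (n + 1)!) :=
        norm_opComm_heis_le_of_lt_dist hloc hmem hsa hC₀ hC₀nn hR hB n X hXΛ hsep A hA t ht
    _ ≤ 2 * ‖A‖ * ‖B‖ * X.card * Real.exp (Real.exp 1 * (2 * C₀ * t) - (n + 1 : ℕ)) := by
        gcongr
        exact pow_div_factorial_le_exp_mul_sub (by positivity) _
    _ ≤ _ := by
        gcongr 2 * ‖A‖ * ‖B‖ * X.card * ?_
        refine Real.exp_le_exp.mpr ?_
        have := Nat.le_ceil (fsetDist X Y / R)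
        rw [hn] at this
        linarith

/-- **Theorem A.1** (Lieb-Robinson bound for the finite-range part of the interaction):
if `C₀ = sup_{x∈Λ} Σ_{y∈Λ} Σ_{Z∋x,y} ‖h_Z‖ < ∞` and `v = 2eC₀`, then
`‖[τ^{(<R)}_{t,Λ}(A), B]‖ ≤ 2‖A‖‖B‖|X| exp(vt − d(X,Y)/R)`. -/
theorem statement_2
    {Ω : Type*} [MetricSpace Ω] [Countable Ω] [DecidableEq Ω]
    {H : Type*} [NormedAddCommGroup H] [InnerProductSpace ℂ H] [CompleteSpace H]
    (Λ : Finset Ω) (𝓐 : Finset Ω → Subalgebra ℂ (H →L[ℂ] H))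
    (hmono : ∀ S S' : Finset Ω, S ⊆ S' → 𝓐 S ≤ 𝓐 S')
    (hstar : ∀ S : Finset Ω, ∀ a ∈ 𝓐 S, star a ∈ 𝓐 S)
    (hloc : ∀ S S' : Finset Ω, Disjoint S S' →
      ∀ a ∈ 𝓐 S, ∀ b ∈ 𝓐 S', a * b = b * a)
    (h : Finset Ω → (H →L[ℂ] H))
    (hmem : ∀ Z : Finset Ω, Z ⊆ Λ → h Z ∈ 𝓐 Z)
    (hsa : ∀ Z : Finset Ω, IsSelfAdjoint (h Z))
    (C₀ : ℝ)
    (hC₀ : ∀ x ∈ Λ, ∑ y ∈ Λ,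
      ∑ Z ∈ Λ.powerset.filter (fun Z => x ∈ Z ∧ y ∈ Z), ‖h Z‖ ≤ C₀)
    (R : ℝ) (hR : 0 < R)
    (X Y : Finset Ω) (hXΛ : X ⊆ Λ) (hYΛ : Y ⊆ Λ) (hXY : 0 < fsetDist X Y)
    (A B : H →L[ℂ] H) (hA : A ∈ 𝓐 X) (hB : B ∈ 𝓐 Y)
    (t : ℝ) (ht : 0 ≤ t) :
    ‖opComm (heis (Ham Λ (hlt h R)) t A) B‖ ≤
      2 * ‖A‖ * ‖B‖ * X.card *
        Real.exp (2 * Real.exp 1 * C₀ * t - fsetDist X Y / R) :=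
  statement_2_general Λ 𝓐 hloc h hmem hsa C₀ hC₀ R hR X Y hXΛ hXY A B hA hB t ht
end
end

section
/- Assume Assumption A (i) and (ii) and the volume bound, and set v = 2eC₀. Then there is a constant 𝒞₂ > 0, depending only on the constants C and D of the volume bound, such that for every A ∈ 𝒜_X with X ⊆ Λ, every t ≥ 0, r > 0 and R ≥ 1: Σ_{Z⊆Λ: Z∩X̃_r = ∅} ‖[τ^{(<R)}_{t,Λ}(A), h_Z^{(≥R)}]‖ ≤ 𝒞₂ ‖A‖ |X|² (max(r,R))^D R f(R) e^{vt − r/R}. -/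
noncomputable section

open Complex

variable {Ω : Type*} [MetricSpace Ω]
variable {H : Type*} [NormedAddCommGroup H] [InnerProductSpace ℂ H] [CompleteSpace H]

/-!
Let `τ` be the dynamics of the truncated interaction `Φ = h^{(<R)}`. Iterating the Duhamel
inequality `‖[τ_t A, B]‖ ≤ ‖[A, B]‖ + 2 ‖A‖ ∫₀ᵗ ∑_{Z ∩ X ≠ ∅} ‖[τ_s Φ_Z, B]‖ ds` bounds the
commutator by a series over chains of interaction terms linking `X` to the support of `B`. Each
link has diameter `< R`, so the chains of length `n < d(X, supp B) / R` contribute nothing, while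
Assumption A (ii) bounds the order-`n` term by `(2 C₀ t)ⁿ / n! · |X|`. Multiplying the surviving
terms by `e^{n - d/R} ≥ 1` sums the series to the Lieb–Robinson bound
`2 ‖A‖ ‖B‖ |X| e^{2 e C₀ t} ∑_{x, z} e^{-d(x,z)/R}`. Summing it over `B = h_Z^{(≥R)}` with `Z`
outside `X̃_r`, Assumption A (i) bounds the long-range terms through each site by `f(R)`, and the
volume bound, applied shell by shell, gives
`∑_{d(x,z) > r} e^{-d(x,z)/R} ≤ 𝒞 (max(r,R))^D e^{-r/R}`.
-/

open NormedSpace Finset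

section Commutator

omit [CompleteSpace H]

lemma norm_mul_mul_le_of_norm_le_one {R : Type*} [SeminormedRing R] {P Q : R} (X : R)
    (hP : ‖P‖ ≤ 1) (hQ : ‖Q‖ ≤ 1) : ‖P * X * Q‖ ≤ ‖X‖ :=
  calc ‖P * X * Q‖ ≤ ‖P‖ * ‖X‖ * ‖Q‖ := norm_mul₃_le
    _ ≤ 1 * ‖X‖ * 1 := by gcongr
    _ = ‖X‖ := by ring

lemma norm_opComm_le (A B : H →L[ℂ] H) : ‖opComm A B‖ ≤ 2 * ‖A‖ * ‖B‖ :=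
  calc ‖A * B - B * A‖ ≤ ‖A‖ * ‖B‖ + ‖B‖ * ‖A‖ :=
        (norm_sub_le _ _).trans (add_le_add (norm_mul_le _ _) (norm_mul_le _ _))
    _ = 2 * ‖A‖ * ‖B‖ := by ring

lemma norm_opComm_comm (A B : H →L[ℂ] H) : ‖opComm A B‖ = ‖opComm B A‖ := by
  rw [opComm, opComm, ← norm_neg, neg_sub]

lemma HasDerivAt.opComm_left {F : ℝ → H →L[ℂ] H} {F' : H →L[ℂ] H} {s : ℝ}
    (hF : HasDerivAt F F' s) (A : H →L[ℂ] H) :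
    HasDerivAt (fun u => opComm A (F u)) (opComm A F') s :=
  (hF.const_mul A).sub (hF.mul_const A)

lemma opComm_sum_left {ι : Type*} (s : Finset ι) (F : ι → H →L[ℂ] H) (B : H →L[ℂ] H) :
    opComm (∑ i ∈ s, F i) B = ∑ i ∈ s, opComm (F i) B := by
  simp only [opComm, mul_sum, sum_mul, sum_sub_distrib]

end Commutator

section Propagator

def propagator (K : H →L[ℂ] H) (s : ℝ) : H →L[ℂ] H := exp ((I * s) • K)

lemma heis_eq_propagator (K : H →L[ℂ] H) (t : ℝ) (A : H →L[ℂ] H) :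
    heis K t A = propagator K t * A * propagator K (-t) := by
  simp [heis, propagator, mul_neg, neg_smul]

lemma propagator_zero (K : H →L[ℂ] H) : propagator K 0 = 1 := by
  simp [propagator]

lemma propagator_mul_propagator_neg (K : H →L[ℂ] H) (s : ℝ) :
    propagator K s * propagator K (-s) = 1 := by
  let _ : NormedAlgebra ℚ (H →L[ℂ] H) := NormedAlgebra.restrictScalars ℚ ℂ _
  rw [propagator, propagator, ← exp_add_of_commute (((Commute.refl K).smul_left _).smul_right _),
    ← add_smul]
  simp

lemma propagator_neg_mul_propagator (K : H →L[ℂ] H) (s : ℝ) :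
    propagator K (-s) * propagator K s = 1 := by
  simpa using propagator_mul_propagator_neg K (-s)

lemma norm_propagator_le_one {K : H →L[ℂ] H} (hK : IsSelfAdjoint K) (s : ℝ) :
    ‖propagator K s‖ ≤ 1 := by
  have hstar : star (propagator K s) = propagator K (-s) := by
    rw [propagator, propagator, star_exp, star_smul, hK.star_eq, star_mul', Complex.star_def]
    simp
  have hunit : ‖propagator K s‖ * ‖propagator K s‖ = ‖(1 : H →L[ℂ] H)‖ := by
    rw [← CStarRing.norm_star_mul_self, hstar, propagator_neg_mul_propagator]
  have hone : ‖(1 : H →L[ℂ] H)‖ ≤ 1 := ContinuousLinearMap.norm_id_le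
  nlinarith [norm_nonneg (propagator K s)]

lemma hasDerivAt_propagator (K : H →L[ℂ] H) (s : ℝ) :
    HasDerivAt (propagator K) (propagator K s * (I • K)) s := by
  have h := (hasDerivAt_exp_smul_const (I • K) (s : ℂ)).scomp s Complex.ofRealCLM.hasDerivAt
  have hfun : propagator K = fun u : ℝ => exp (((u : ℂ) * I) • K) :=
    funext fun u => by rw [propagator, mul_comm]
  rw [hfun]
  simpa [Function.comp_def, smul_smul] using h

lemma norm_heis_le {K : H →L[ℂ] H} (hK : IsSelfAdjoint K) (t : ℝ) (A : H →L[ℂ] H) :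
    ‖heis K t A‖ ≤ ‖A‖ := by
  rw [heis_eq_propagator]
  exact norm_mul_mul_le_of_norm_le_one A (norm_propagator_le_one hK t)
    (norm_propagator_le_one hK (-t))

lemma heis_sum {ι : Type*} (K : H →L[ℂ] H) (t : ℝ) (s : Finset ι) (F : ι → H →L[ℂ] H) :
    heis K t (∑ i ∈ s, F i) = ∑ i ∈ s, heis K t (F i) := by
  simp only [heis, mul_sum, sum_mul]

lemma commute_propagator {A K : H →L[ℂ] H} (h : Commute A K) (s : ℝ) :
    Commute A (propagator K s) :=
  (h.smul_right _).exp_right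

lemma propagator_mul_propagator_neg_mul (K : H →L[ℂ] H) (s : ℝ) (X : H →L[ℂ] H) :
    propagator K s * (propagator K (-s) * X) = X := by
  rw [← mul_assoc, propagator_mul_propagator_neg, one_mul]

lemma propagator_neg_mul_propagator_mul (K : H →L[ℂ] H) (s : ℝ) (X : H →L[ℂ] H) :
    propagator K (-s) * (propagator K s * X) = X := by
  rw [← mul_assoc, propagator_neg_mul_propagator, one_mul]

def relPropagator (K M : H →L[ℂ] H) (s : ℝ) : H →L[ℂ] H := propagator K s * propagator M (-s)

lemma norm_relPropagator_le_one {K M : H →L[ℂ] H} (hK : IsSelfAdjoint K) (hM : IsSelfAdjoint M)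
    (s : ℝ) : ‖relPropagator K M s‖ ≤ 1 :=
  (norm_mul_le _ _).trans <|
    mul_le_one₀ (norm_propagator_le_one hK s) (norm_nonneg _) (norm_propagator_le_one hM (-s))

lemma hasDerivAt_relPropagator (K M : H →L[ℂ] H) (s : ℝ) :
    HasDerivAt (relPropagator K M) (propagator K s * (I • (K - M)) * propagator M (-s)) s := by
  have hM : HasDerivAt (fun u => propagator M (-u)) (-(propagator M (-s) * (I • M))) s := by
    simpa [Function.comp_def] using (hasDerivAt_propagator M (-s)).scomp s (hasDerivAt_neg s)
  refine ((hasDerivAt_propagator K s).mul hM).congr_deriv ?_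
  rw [← (commute_propagator ((Commute.refl M).smul_left I) (-s)).eq, smul_sub]
  noncomm_ring

variable {K₁ K₂ A B : H →L[ℂ] H}

/-- In the interaction picture with respect to `K₂`, which commutes with `A`, only `K₁` moves
`A`. -/
lemma opComm_heis_add_eq (hAK₂ : Commute A K₂) (s : ℝ) :
    opComm (heis (K₁ + K₂) s A) B = relPropagator (K₁ + K₂) K₂ s *
      opComm A (relPropagator K₂ (K₁ + K₂) s * B * relPropagator (K₁ + K₂) K₂ s) *
        relPropagator K₂ (K₁ + K₂) s := by
  have hA : ∀ u X, propagator K₂ u * (A * X) = A * (propagator K₂ u * X) := fun u X => by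
    rw [← mul_assoc, ← mul_assoc, (commute_propagator hAK₂ u).eq]
  simp only [relPropagator, opComm, heis_eq_propagator, mul_sub, sub_mul, mul_assoc, hA,
    propagator_mul_propagator_neg_mul, propagator_neg_mul_propagator_mul,
    propagator_mul_propagator_neg, mul_one]

lemma hasDerivAt_relPropagator_mul_mul (s : ℝ) :
    HasDerivAt (fun u => relPropagator K₂ (K₁ + K₂) u * B * relPropagator (K₁ + K₂) K₂ u)
      (I • (relPropagator K₂ (K₁ + K₂) s * opComm B (heis (K₁ + K₂) s K₁) *
        relPropagator (K₁ + K₂) K₂ s)) s := by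
  refine (((hasDerivAt_relPropagator K₂ (K₁ + K₂) s).mul_const B).mul
    (hasDerivAt_relPropagator (K₁ + K₂) K₂ s)).congr_deriv ?_
  have h₁ : K₂ - (K₁ + K₂) = -K₁ := by abel
  have h₂ : K₁ + K₂ - K₂ = K₁ := by abel
  simp only [relPropagator, h₁, h₂, opComm, heis_eq_propagator, smul_mul_assoc, mul_smul_comm,
    mul_assoc, neg_mul, mul_neg, smul_neg, mul_sub, sub_mul, smul_sub,
    propagator_neg_mul_propagator_mul]
  abel

theorem norm_opComm_heis_le_of_hasDerivAt (hK₁ : IsSelfAdjoint K₁) (hK₂ : IsSelfAdjoint K₂)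
    (hAK₂ : Commute A K₂) {Ψ ψ : ℝ → ℝ} (hΨ : ∀ s, HasDerivAt Ψ (ψ s) s)
    (hψ : ∀ s, 0 ≤ s → 2 * ‖opComm (heis (K₁ + K₂) s K₁) B‖ ≤ ψ s)
    (h₀ : ‖opComm A B‖ ≤ ‖A‖ * Ψ 0) {t : ℝ} (ht : 0 ≤ t) :
    ‖opComm (heis (K₁ + K₂) t A) B‖ ≤ ‖A‖ * Ψ t := by
  have hM : IsSelfAdjoint (K₁ + K₂) := hK₁.add hK₂
  set P := relPropagator K₂ (K₁ + K₂)
  set Q := relPropagator (K₁ + K₂) K₂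
  have hP : ∀ s, ‖P s‖ ≤ 1 := norm_relPropagator_le_one hK₂ hM
  have hQ : ∀ s, ‖Q s‖ ≤ 1 := norm_relPropagator_le_one hM hK₂
  have hderiv := fun s =>
    (hasDerivAt_relPropagator_mul_mul (K₁ := K₁) (K₂ := K₂) (B := B) s).opComm_left A
  have hG : ∀ s ∈ Set.Icc 0 t, ‖opComm A (P s * B * Q s)‖ ≤ ‖A‖ * Ψ s := by
    refine image_norm_le_of_norm_deriv_right_le_deriv_boundary
      (fun s _ => (hderiv s).continuousAt.continuousWithinAt)
      (fun s _ => (hderiv s).hasDerivWithinAt) ?_ (fun s => (hΨ s).const_mul ‖A‖) fun s hs => ?_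
    · simpa [P, Q, relPropagator, propagator_zero] using h₀
    · set X := opComm B (heis (K₁ + K₂) s K₁)
      calc ‖opComm A (I • (P s * X * Q s))‖ ≤ 2 * ‖A‖ * ‖P s * X * Q s‖ := by
            simpa [norm_smul] using norm_opComm_le A (I • (P s * X * Q s))
        _ ≤ ‖A‖ * (2 * ‖opComm (heis (K₁ + K₂) s K₁) B‖) := by
            rw [norm_opComm_comm (heis (K₁ + K₂) s K₁)]
            nlinarith [norm_mul_mul_le_of_norm_le_one X (hP s) (hQ s), norm_nonneg A]
        _ ≤ ‖A‖ * ψ s := by gcongr; exact hψ s hs.1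
  rw [opComm_heis_add_eq hAK₂]
  exact (norm_mul_mul_le_of_norm_le_one _ (hQ t) (hP t)).trans (hG t ⟨ht, le_rfl⟩)

end Propagator

section LinkedSum

variable {α : Type*} [DecidableEq α]

def touching (Λ S : Finset α) : Finset (Finset α) :=
  Λ.powerset.filter fun Z => ¬Disjoint Z S

lemma mem_touching {Λ S Z : Finset α} : Z ∈ touching Λ S ↔ Z ⊆ Λ ∧ ¬Disjoint Z S := by
  simp [touching]

/-- `linkedSum Λ φ w n S` sums `φ Z₁ ⋯ φ Zₙ * w Zₙ` over chains `S, Z₁, …, Zₙ` of subsets of `Λ`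
in which consecutive sets meet. -/
def linkedSum (Λ : Finset α) (φ w : Finset α → ℝ) : ℕ → Finset α → ℝ
  | 0, S => w S
  | n + 1, S => ∑ Z ∈ touching Λ S, φ Z * linkedSum Λ φ w n Z

variable {Λ : Finset α} {φ u w : Finset α → ℝ} {c₀ : ℝ}

lemma linkedSum_succ_le (hφ : ∀ Z, 0 ≤ φ Z)
    (hsum : ∀ S ⊆ Λ, ∑ Z ∈ touching Λ S, φ Z * #Z ≤ c₀ * #S) {n : ℕ} {a : ℝ} (ha : 0 ≤ a)
    (h : ∀ Z ⊆ Λ, Z.Nonempty → linkedSum Λ φ w n Z ≤ a * #Z) {S : Finset α} (hS : S ⊆ Λ) :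
    linkedSum Λ φ w (n + 1) S ≤ c₀ * a * #S :=
  calc ∑ Z ∈ touching Λ S, φ Z * linkedSum Λ φ w n Z
      ≤ ∑ Z ∈ touching Λ S, φ Z * (a * #Z) := by
        refine sum_le_sum fun Z hZ => ?_
        obtain ⟨hZΛ, hZS⟩ := mem_touching.1 hZ
        have hZ : Z.Nonempty := (not_disjoint_iff_nonempty_inter.1 hZS).mono inter_subset_left
        exact mul_le_mul_of_nonneg_left (h Z hZΛ hZ) (hφ Z)
    _ = a * ∑ Z ∈ touching Λ S, φ Z * #Z := by
        rw [mul_sum]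
        exact sum_congr rfl fun _ _ => by ring
    _ ≤ a * (c₀ * #S) := by gcongr; exact hsum S hS
    _ = c₀ * a * #S := by ring

lemma linkedSum_succ_le_pow (hφ : ∀ Z, 0 ≤ φ Z)
    (hsum : ∀ S ⊆ Λ, ∑ Z ∈ touching Λ S, φ Z * #Z ≤ c₀ * #S) (hc₀ : 0 ≤ c₀) {c : ℝ}
    (hc : 0 ≤ c) (hw : ∀ Z ⊆ Λ, Z.Nonempty → w Z ≤ c * #Z) (n : ℕ) {S : Finset α}
    (hS : S ⊆ Λ) : linkedSum Λ φ w (n + 1) S ≤ c * c₀ ^ (n + 1) * #S := by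
  have hpow : ∀ n, ∀ Z ⊆ Λ, Z.Nonempty → linkedSum Λ φ w n Z ≤ c * c₀ ^ n * #Z := by
    intro n
    induction n with
    | zero => simpa [linkedSum] using hw
    | succ n ih =>
      intro Z hZ _
      simpa [pow_succ, mul_comm, mul_left_comm, mul_assoc] using
        linkedSum_succ_le hφ hsum (by positivity) ih hZ
  simpa [pow_succ, mul_comm, mul_left_comm, mul_assoc] using
    linkedSum_succ_le hφ hsum (by positivity) (hpow n) hS

lemma sum_touching_mul_card_le (hφ : ∀ Z, 0 ≤ φ Z) {C₀ : ℝ}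
    (hC₀ : ∀ x ∈ Λ, ∑ y ∈ Λ, ∑ Z ∈ Λ.powerset.filter (fun Z => x ∈ Z ∧ y ∈ Z), φ Z ≤ C₀)
    {S : Finset α} (hS : S ⊆ Λ) : ∑ Z ∈ touching Λ S, φ Z * #Z ≤ C₀ * #S := by
  have hcount : ∀ Z ⊆ Λ, φ Z * #Z * #(Z ∩ S) =
      ∑ x ∈ S, ∑ y ∈ Λ, if x ∈ Z ∧ y ∈ Z then φ Z else 0 := fun Z hZ => by
    simp only [ite_and, sum_ite_irrel, sum_ite_mem, inter_eq_right.2 hZ, sum_const,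
      nsmul_eq_mul, inter_comm Z S, mul_zero]
    ring
  have hnonneg : ∀ Z, 0 ≤ φ Z * #Z := fun Z => mul_nonneg (hφ Z) (Nat.cast_nonneg _)
  calc ∑ Z ∈ touching Λ S, φ Z * #Z
      ≤ ∑ Z ∈ touching Λ S, φ Z * #Z * #(Z ∩ S) := by
        refine sum_le_sum fun Z hZ => le_mul_of_one_le_right (hnonneg Z) ?_
        exact_mod_cast (not_disjoint_iff_nonempty_inter.1 (mem_touching.1 hZ).2).card_pos
    _ ≤ ∑ Z ∈ Λ.powerset, φ Z * #Z * #(Z ∩ S) :=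
        sum_le_sum_of_subset_of_nonneg (filter_subset _ _)
          fun Z _ _ => mul_nonneg (hnonneg Z) (Nat.cast_nonneg _)
    _ = ∑ x ∈ S, ∑ y ∈ Λ, ∑ Z ∈ Λ.powerset.filter (fun Z => x ∈ Z ∧ y ∈ Z), φ Z := by
        rw [sum_congr rfl fun Z hZ => hcount Z (mem_powerset.1 hZ), sum_comm]
        refine sum_congr rfl fun x _ => ?_
        rw [sum_comm]
        exact sum_congr rfl fun y _ => (sum_filter _ _).symm
    _ ≤ ∑ _x ∈ S, C₀ := sum_le_sum fun x hx => hC₀ x (hS hx)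
    _ = C₀ * #S := by rw [sum_const, nsmul_eq_mul, mul_comm]

/-- The bound obtained by iterating the Duhamel inequality `N` times. -/
def seriesBound (Λ : Finset α) (φ u w : Finset α → ℝ) (N : ℕ) (S : Finset α) (t : ℝ) : ℝ :=
  ∑ n ∈ range N, t ^ n / n.factorial * linkedSum Λ φ u n S +
    t ^ N / N.factorial * linkedSum Λ φ w N S

lemma seriesBound_zero (S : Finset α) (t : ℝ) : seriesBound Λ φ u w 0 S t = w S := by
  simp [seriesBound, linkedSum]

lemma seriesBound_succ_apply_zero (N : ℕ) (S : Finset α) :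
    seriesBound Λ φ u w (N + 1) S 0 = u S := by
  simp [seriesBound, sum_range_succ', linkedSum]

lemma hasDerivAt_pow_succ_div_factorial (n : ℕ) (t : ℝ) :
    HasDerivAt (fun s : ℝ => s ^ (n + 1) / (n + 1).factorial) (t ^ n / n.factorial) t := by
  refine ((hasDerivAt_pow (n + 1) t).div_const ((n + 1).factorial : ℝ)).congr_deriv ?_
  rw [Nat.factorial_succ]
  push_cast
  field_simp

lemma hasDerivAt_seriesBound (N : ℕ) (S : Finset α) (t : ℝ) :
    HasDerivAt (seriesBound Λ φ u w (N + 1) S)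
      (∑ Z ∈ touching Λ S, φ Z * seriesBound Λ φ u w N Z t) t := by
  have hfun : seriesBound Λ φ u w (N + 1) S = fun s => u S +
      ∑ n ∈ range N, s ^ (n + 1) / (n + 1).factorial * linkedSum Λ φ u (n + 1) S +
      s ^ (N + 1) / (N + 1).factorial * linkedSum Λ φ w (N + 1) S := by
    ext s
    simp [seriesBound, sum_range_succ', linkedSum, add_comm]
  rw [hfun]
  have hsum := HasDerivAt.fun_sum (u := range N) fun n _ =>
    (hasDerivAt_pow_succ_div_factorial n t).mul_const (linkedSum Λ φ u (n + 1) S)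
  refine ((hsum.const_add (u S)).add
    ((hasDerivAt_pow_succ_div_factorial N t).mul_const _)).congr_deriv ?_
  simp only [seriesBound, linkedSum, mul_add, mul_sum, sum_add_distrib]
  rw [sum_comm]
  congr 1 <;> refine sum_congr rfl fun _ _ => ?_
  · exact sum_congr rfl fun _ _ => by ring
  · ring

end LinkedSum

section Locality

variable [DecidableEq Ω] {Λ : Finset Ω} {φ u w : Finset Ω → ℝ} {c₀ : ℝ}

/-- Each link of a chain has diameter less than `R`, so `n` links cannot bridge a gap of `n R`. -/
lemma linkedSum_eq_zero {R : ℝ} (hφR : ∀ Z, φ Z ≠ 0 → fdiam Z < R) {Z₀ : Finset Ω}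
    (hw : ∀ S, Disjoint S Z₀ → w S = 0) :
    ∀ (n : ℕ) (S : Finset Ω), (∀ x ∈ S, ∀ z ∈ Z₀, n * R < dist x z) →
      linkedSum Λ φ w n S = 0 := by
  intro n
  induction n with
  | zero =>
    intro S hfar
    refine hw S (disjoint_left.2 fun x hxS hxZ => ?_)
    simpa using hfar x hxS x hxZ
  | succ n ih =>
    intro S hfar
    refine sum_eq_zero fun Z hZ => ?_
    by_cases hφZ : φ Z = 0
    · simp [hφZ]
    obtain ⟨y, hyZ, hyS⟩ := not_disjoint_iff.1 (mem_touching.1 hZ).2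
    rw [ih Z fun x hx z hz => ?_, mul_zero]
    have hxy : dist y x ≤ fdiam Z :=
      Metric.dist_le_diam_of_mem Z.finite_toSet.isBounded (by simpa using hyZ) (by simpa using hx)
    have := hfar y hyS z hz
    have := dist_triangle y x z
    have := hφR Z hφZ
    push_cast at *
    linarith

lemma linkedSum_le_mul_exp_mul_sum {R : ℝ} (hR : 0 < R) (hφ : ∀ Z, 0 ≤ φ Z)
    (hφR : ∀ Z, φ Z ≠ 0 → fdiam Z < R)
    (hsum : ∀ S ⊆ Λ, ∑ Z ∈ touching Λ S, φ Z * #Z ≤ c₀ * #S) (hc₀ : 0 ≤ c₀) {c : ℝ}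
    (hc : 0 ≤ c) (hw : ∀ Z ⊆ Λ, Z.Nonempty → w Z ≤ c * #Z) {Z₀ : Finset Ω}
    (hw₀ : ∀ S, Disjoint S Z₀ → w S = 0) {X : Finset Ω} (hX : X ⊆ Λ) (hXZ₀ : Disjoint X Z₀)
    (n : ℕ) :
    linkedSum Λ φ w n X ≤
      c * c₀ ^ n * #X * (Real.exp n * ∑ z ∈ Z₀, ∑ x ∈ X, Real.exp (-(dist x z / R))) := by
  by_cases hfar : ∀ x ∈ X, ∀ z ∈ Z₀, n * R < dist x z
  · rw [linkedSum_eq_zero hφR hw₀ n X hfar]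
    positivity
  push Not at hfar
  obtain ⟨x, hx, z, hz, hxz⟩ := hfar
  obtain ⟨m, rfl⟩ : ∃ m, n = m + 1 := by
    refine Nat.exists_eq_succ_of_ne_zero fun hn => ?_
    subst hn
    exact disjoint_left.1 hXZ₀ hx (dist_le_zero.1 (by simpa using hxz) ▸ hz)
  have hone : 1 ≤ Real.exp (m + 1 : ℕ) * ∑ z ∈ Z₀, ∑ x ∈ X, Real.exp (-(dist x z / R)) :=
    calc (1 : ℝ) ≤ Real.exp (m + 1 : ℕ) * Real.exp (-(dist x z / R)) := by
          rw [← Real.exp_add]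
          refine Real.one_le_exp ?_
          have := (div_le_iff₀ hR).2 hxz
          linarith
      _ ≤ _ := by
          gcongr
          refine (single_le_sum (f := fun x => Real.exp (-(dist x z / R)))
            (fun _ _ => (Real.exp_pos _).le) hx).trans ?_
          exact single_le_sum (f := fun z => ∑ x ∈ X, Real.exp (-(dist x z / R)))
            (fun _ _ => sum_nonneg fun _ _ => (Real.exp_pos _).le) hz
  calc linkedSum Λ φ w (m + 1) X ≤ c * c₀ ^ (m + 1) * #X :=
        linkedSum_succ_le_pow hφ hsum hc₀ hc hw m hX
    _ ≤ _ := le_mul_of_one_le_right (by positivity) hone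

lemma seriesBound_succ_le {R : ℝ} (hR : 0 < R) (hφ : ∀ Z, 0 ≤ φ Z)
    (hφR : ∀ Z, φ Z ≠ 0 → fdiam Z < R)
    (hsum : ∀ S ⊆ Λ, ∑ Z ∈ touching Λ S, φ Z * #Z ≤ c₀ * #S) (hc₀ : 0 ≤ c₀) {c : ℝ}
    (hc : 0 ≤ c) (hu : ∀ Z ⊆ Λ, Z.Nonempty → u Z ≤ c * #Z) {Z₀ : Finset Ω}
    (hu₀ : ∀ S, Disjoint S Z₀ → u S = 0) (hw : ∀ Z ⊆ Λ, Z.Nonempty → w Z ≤ c * #Z)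
    {X : Finset Ω} (hX : X ⊆ Λ) (hXZ₀ : Disjoint X Z₀) {t : ℝ} (ht : 0 ≤ t) (N : ℕ) :
    seriesBound Λ φ u w (N + 1) X t ≤ c * #X *
      (Real.exp (Real.exp 1 * c₀ * t) * ∑ z ∈ Z₀, ∑ x ∈ X, Real.exp (-(dist x z / R)) +
        (c₀ * t) ^ (N + 1) / (N + 1).factorial) := by
  set E := ∑ z ∈ Z₀, ∑ x ∈ X, Real.exp (-(dist x z / R))
  have hterm : ∀ n, t ^ n / n.factorial * linkedSum Λ φ u n X ≤
      c * #X * E * ((Real.exp 1 * c₀ * t) ^ n / n.factorial) := fun n =>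
    calc _ ≤ t ^ n / n.factorial * (c * c₀ ^ n * #X * (Real.exp n * E)) := by
          gcongr
          exact linkedSum_le_mul_exp_mul_sum hR hφ hφR hsum hc₀ hc hu hu₀ hX hXZ₀ n
      _ = _ := by rw [← Real.exp_one_pow]; ring
  have hrem : t ^ (N + 1) / (N + 1).factorial * linkedSum Λ φ w (N + 1) X ≤
      c * #X * ((c₀ * t) ^ (N + 1) / (N + 1).factorial) :=
    calc _ ≤ t ^ (N + 1) / (N + 1).factorial * (c * c₀ ^ (N + 1) * #X) := by
          gcongr
          exact linkedSum_succ_le_pow hφ hsum hc₀ hc hw N hX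
      _ = _ := by ring
  have hexp : ∑ n ∈ range (N + 1), t ^ n / n.factorial * linkedSum Λ φ u n X ≤
      c * #X * E * Real.exp (Real.exp 1 * c₀ * t) := by
    refine (sum_le_sum fun n _ => hterm n).trans ?_
    rw [← mul_sum]
    gcongr
    exact Real.sum_le_exp_of_nonneg (by positivity) _
  calc seriesBound Λ φ u w (N + 1) X t
      ≤ c * #X * E * Real.exp (Real.exp 1 * c₀ * t) +
          c * #X * ((c₀ * t) ^ (N + 1) / (N + 1).factorial) := add_le_add hexp hrem
    _ = _ := by ring

end Locality

section Picard

variable {α : Type*} [DecidableEq α] {𝓐 : Finset α → Subalgebra ℂ (H →L[ℂ] H)} {Λ : Finset α}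
  {Φ : Finset α → H →L[ℂ] H} {B : H →L[ℂ] H} {Z₀ : Finset α}

theorem norm_opComm_heis_le_seriesBound
    (hloc : ∀ S S' : Finset α, Disjoint S S' → ∀ a ∈ 𝓐 S, ∀ b ∈ 𝓐 S', a * b = b * a)
    (hΦ : ∀ Z ⊆ Λ, Φ Z ∈ 𝓐 Z) (hΦsa : ∀ Z ⊆ Λ, IsSelfAdjoint (Φ Z)) (hB : B ∈ 𝓐 Z₀)
    (N : ℕ) : ∀ S ⊆ Λ, ∀ A ∈ 𝓐 S, ∀ t, 0 ≤ t →
      ‖opComm (heis (Ham Λ Φ) t A) B‖ ≤ ‖A‖ * seriesBound Λ (fun Z => 2 * ‖Φ Z‖)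
        (fun S => if Disjoint S Z₀ then 0 else 2 * ‖B‖) (fun _ => 2 * ‖B‖) N S t := by
  have hHam : ∀ 𝒵 ⊆ Λ.powerset, IsSelfAdjoint (∑ Z ∈ 𝒵, Φ Z) := fun 𝒵 h𝒵 =>
    isSelfAdjoint_sum _ fun Z hZ => hΦsa Z (mem_powerset.1 (h𝒵 hZ))
  induction N with
  | zero =>
    intro S _ A _ t _
    rw [seriesBound_zero]
    calc ‖opComm (heis (Ham Λ Φ) t A) B‖ ≤ 2 * ‖heis (Ham Λ Φ) t A‖ * ‖B‖ := norm_opComm_le _ _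
      _ ≤ 2 * ‖A‖ * ‖B‖ := by gcongr; exact norm_heis_le (hHam _ subset_rfl) t A
      _ = ‖A‖ * (2 * ‖B‖) := by ring
  | succ N ih =>
    intro S hS A hA t ht
    -- Only the terms meeting `S` move `A`; the others commute with it.
    set K₁ := ∑ Z ∈ touching Λ S, Φ Z
    set K₂ := ∑ Z ∈ Λ.powerset.filter (Disjoint · S), Φ Z
    have hsplit : Ham Λ Φ = K₁ + K₂ := (sum_filter_not_add_sum_filter _ _ _).symm
    have hAK₂ : Commute A K₂ := Commute.sum_right _ _ _ fun Z hZ =>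
      have ⟨hZΛ, hZS⟩ := mem_filter.1 hZ
      hloc S Z hZS.symm A hA (Φ Z) (hΦ Z (mem_powerset.1 hZΛ))
    rw [hsplit]
    refine norm_opComm_heis_le_of_hasDerivAt (hHam _ (filter_subset _ _))
      (hHam _ (filter_subset _ _)) hAK₂ (hasDerivAt_seriesBound N S) (fun s hs => ?_)
      ?_ ht
    · change 2 * ‖opComm (heis (K₁ + K₂) s K₁) B‖ ≤ _
      rw [← hsplit, heis_sum, opComm_sum_left]
      calc 2 * ‖∑ Z ∈ touching Λ S, opComm (heis (Ham Λ Φ) s (Φ Z)) B‖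
          ≤ 2 * ∑ Z ∈ touching Λ S, ‖opComm (heis (Ham Λ Φ) s (Φ Z)) B‖ := by
            gcongr; exact norm_sum_le _ _
        _ ≤ 2 * ∑ Z ∈ touching Λ S, ‖Φ Z‖ * seriesBound Λ (fun Z => 2 * ‖Φ Z‖)
            (fun S => if Disjoint S Z₀ then 0 else 2 * ‖B‖) (fun _ => 2 * ‖B‖) N Z s := by
            gcongr with Z hZ
            obtain ⟨hZΛ, -⟩ := mem_touching.1 hZ
            exact ih Z hZΛ (Φ Z) (hΦ Z hZΛ) s hs
        _ = _ := by rw [mul_sum]; exact sum_congr rfl fun _ _ => by ring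
    · rw [seriesBound_succ_apply_zero]
      split_ifs with hSZ₀
      · simp [opComm, hloc S Z₀ hSZ₀ A hA B hB]
      · linarith [norm_opComm_le A B]

end Picard

section LiebRobinson

variable [DecidableEq Ω] {𝓐 : Finset Ω → Subalgebra ℂ (H →L[ℂ] H)} {Λ : Finset Ω}
  {Φ : Finset Ω → H →L[ℂ] H} {B : H →L[ℂ] H} {Z₀ : Finset Ω}

theorem norm_opComm_heis_le_of_fdiam_lt
    (hloc : ∀ S S' : Finset Ω, Disjoint S S' → ∀ a ∈ 𝓐 S, ∀ b ∈ 𝓐 S', a * b = b * a)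
    (hΦ : ∀ Z ⊆ Λ, Φ Z ∈ 𝓐 Z) (hΦsa : ∀ Z ⊆ Λ, IsSelfAdjoint (Φ Z)) (hB : B ∈ 𝓐 Z₀)
    {R : ℝ} (hR : 0 < R) (hΦR : ∀ Z, Φ Z ≠ 0 → fdiam Z < R) {C₀ : ℝ}
    (hsum : ∀ S ⊆ Λ, ∑ Z ∈ touching Λ S, ‖Φ Z‖ * #Z ≤ C₀ * #S)
    {X : Finset Ω} (hX : X ⊆ Λ) {A : H →L[ℂ] H} (hA : A ∈ 𝓐 X) (hXZ₀ : Disjoint X Z₀)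
    {t : ℝ} (ht : 0 ≤ t) :
    ‖opComm (heis (Ham Λ Φ) t A) B‖ ≤ 2 * ‖A‖ * ‖B‖ * #X *
      Real.exp (2 * Real.exp 1 * C₀ * t) * ∑ z ∈ Z₀, ∑ x ∈ X, Real.exp (-(dist x z / R)) := by
  have hseries := norm_opComm_heis_le_seriesBound hloc hΦ hΦsa hB
  rcases X.eq_empty_or_nonempty with rfl | ⟨x₀, hx₀⟩
  · simpa [seriesBound, linkedSum, touching] using hseries 1 ∅ (empty_subset _) A hA t ht
  have hC₀ : 0 ≤ C₀ := by
    have := hsum {x₀} (singleton_subset_iff.2 (hX hx₀))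
    simp only [card_singleton, Nat.cast_one, mul_one] at this
    exact (sum_nonneg fun Z _ => by positivity).trans this
  have hsum₂ : ∀ S ⊆ Λ, ∑ Z ∈ touching Λ S, 2 * ‖Φ Z‖ * #Z ≤ 2 * C₀ * #S := fun S hS => by
    simp only [mul_assoc, ← mul_sum]
    linarith [hsum S hS]
  have hw : ∀ Z ⊆ Λ, Z.Nonempty → 2 * ‖B‖ ≤ 2 * ‖B‖ * #Z := fun Z _ hZ =>
    le_mul_of_one_le_right (by positivity) (by exact_mod_cast hZ.card_pos)
  have hu : ∀ Z ⊆ Λ, Z.Nonempty → (if Disjoint Z Z₀ then 0 else 2 * ‖B‖) ≤ 2 * ‖B‖ * #Z :=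
    fun Z hZΛ hZ => by split_ifs; exacts [by positivity, hw Z hZΛ hZ]
  set E := ∑ z ∈ Z₀, ∑ x ∈ X, Real.exp (-(dist x z / R))
  set v := Real.exp 1 * (2 * C₀) * t
  have hbound : ∀ N : ℕ, ‖opComm (heis (Ham Λ Φ) t A) B‖ ≤
      ‖A‖ * (2 * ‖B‖ * #X * (Real.exp v * E + (2 * C₀ * t) ^ (N + 1) / (N + 1).factorial)) :=
    fun N => (hseries (N + 1) X hX A hA t ht).trans <| mul_le_mul_of_nonneg_left
      (seriesBound_succ_le hR (fun Z => by positivity) (fun Z hZ => hΦR Z (by simpa using hZ))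
        hsum₂ (by positivity) (by positivity) hu (fun S h => if_pos h) hw hX hXZ₀ ht N)
      (norm_nonneg A)
  have hlim := ((FloorSemiring.tendsto_pow_div_factorial_atTop (2 * C₀ * t)).comp
    (Filter.tendsto_add_atTop_nat 1)).const_add (Real.exp v * E) |>.const_mul (2 * ‖B‖ * #X)
      |>.const_mul ‖A‖
  simp only [add_zero] at hlim
  calc _ ≤ ‖A‖ * (2 * ‖B‖ * #X * (Real.exp v * E)) :=
        ge_of_tendsto hlim (Filter.Eventually.of_forall hbound)
    _ = _ := by rw [show v = 2 * Real.exp 1 * C₀ * t by ring]; ring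

end LiebRobinson

section VolumeGrowth

lemma rpow_le_mul_exp_half_sub {D x : ℝ} (hD : 0 < D) (hx : 0 < x) :
    x ^ D ≤ (2 * D) ^ D * Real.exp (x / 2 - D) := by
  rw [Real.rpow_def_of_pos hx, Real.rpow_def_of_pos (by positivity), ← Real.exp_add,
    Real.exp_le_exp]
  have h := Real.log_le_sub_one_of_pos (show 0 < x / (2 * D) by positivity)
  rw [Real.log_div hx.ne' (by positivity)] at h
  have h₂ : x / (2 * D) * D = x / 2 := by field_simp
  nlinarith [mul_le_mul_of_nonneg_right h hD.le]

lemma geom_sum_exp_neg_half_le_three (K : ℕ) :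
    ∑ j ∈ range K, Real.exp (-(1 / 2)) ^ j ≤ 3 := by
  have hq : Real.exp (-(1 / 2)) ≤ 2 / 3 := by
    rw [Real.exp_neg, inv_le_comm₀ (Real.exp_pos _) (by norm_num)]
    linarith [Real.add_one_le_exp (1 / 2 : ℝ)]
  rw [range_eq_Ico]
  refine (geom_sum_Ico_le_of_lt_one (Real.exp_pos _).le (by linarith)).trans ?_
  rw [pow_zero, div_le_iff₀ (by linarith)]
  linarith

/-- Grouping the points by the shell `r + j R < d(x, y) ≤ r + (j + 1) R` they lie in, the
polynomial growth of the shells is beaten by the exponential decay `e^{-j}`. -/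
theorem sum_exp_neg_dist_div_le {Λ : Finset Ω} {x : Ω} {C D : ℝ} (hC : 0 ≤ C) (hD : 0 < D)
    (hvol : ∀ ρ, 0 ≤ ρ → (#(Λ.filter fun y => dist x y ≤ ρ) : ℝ) ≤ C * (1 + ρ) ^ D)
    {r R : ℝ} (hr : 0 ≤ r) (hR : 1 ≤ R) :
    ∑ y ∈ Λ.filter (fun y => r < dist x y), Real.exp (-(dist x y / R)) ≤
      3 * C * (2 * D) ^ D * Real.exp (3 / 2 - D) * max r R ^ D * Real.exp (-(r / R)) := by
  have hR₀ : 0 < R := by linarith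
  set M := max r R
  have hM : 1 ≤ M := hR.trans (le_max_right r R)
  set T := Λ.filter fun y => r < dist x y
  set k : Ω → ℕ := fun y => ⌊(dist x y - r) / R⌋₊
  have hdecay : ∀ y ∈ T, Real.exp (-(dist x y / R)) ≤ Real.exp (-(r / R)) * Real.exp (-(k y)) := by
    intro y hy
    have hk : (k y : ℝ) * R ≤ dist x y - r :=
      (le_div_iff₀ hR₀).1 (Nat.floor_le (div_nonneg (by linarith [(mem_filter.1 hy).2]) hR₀.le))
    rw [← Real.exp_add, Real.exp_le_exp, ← neg_add, neg_le_neg_iff, div_add' _ _ _ hR₀.ne',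
      div_le_div_iff_of_pos_right hR₀]
    linarith
  have hshell : ∀ j : ℕ, (#(T.filter fun y => k y = j) : ℝ) * Real.exp (-j) ≤
      C * (2 * D) ^ D * Real.exp (3 / 2 - D) * M ^ D * Real.exp (-(1 / 2)) ^ j := by
    intro j
    have hρ : 0 ≤ r + (j + 1) * R := by positivity
    have hsub : T.filter (fun y => k y = j) ⊆ Λ.filter fun y => dist x y ≤ r + (j + 1) * R := by
      intro y hy
      simp only [T, mem_filter] at hy ⊢
      refine ⟨hy.1.1, ?_⟩
      have hj := Nat.lt_floor_add_one ((dist x y - r) / R)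
      change _ < ((k y : ℕ) : ℝ) + 1 at hj
      rw [hy.2, div_lt_iff₀ hR₀] at hj
      linarith
    have hgrowth : 1 + (r + (j + 1) * R) ≤ (j + 3) * M := by
      nlinarith [le_max_left r R, le_max_right r R, (Nat.cast_nonneg j : (0 : ℝ) ≤ j)]
    calc (#(T.filter fun y => k y = j) : ℝ) * Real.exp (-j)
        ≤ C * ((j + 3) ^ D * M ^ D) * Real.exp (-j) := by
          gcongr
          refine ((Nat.cast_le.2 (card_le_card hsub)).trans (hvol _ hρ)).trans ?_
          rw [← Real.mul_rpow (by positivity) (by positivity)]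
          gcongr
      _ ≤ C * ((2 * D) ^ D * Real.exp ((j + 3) / 2 - D) * M ^ D) * Real.exp (-j) := by
          gcongr
          exact rpow_le_mul_exp_half_sub hD (by positivity)
      _ = C * (2 * D) ^ D * M ^ D * (Real.exp ((j + 3) / 2 - D) * Real.exp (-j)) := by ring
      _ = _ := by
          have hexp : Real.exp ((j + 3) / 2 - D) * Real.exp (-j) =
              Real.exp (3 / 2 - D) * Real.exp (-(1 / 2)) ^ j := by
            rw [← Real.exp_add, ← Real.exp_nat_mul, ← Real.exp_add]
            ring_nf
          rw [hexp]
          ring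
  calc ∑ y ∈ T, Real.exp (-(dist x y / R))
      ≤ ∑ y ∈ T, Real.exp (-(r / R)) * Real.exp (-(k y)) := sum_le_sum hdecay
    _ = Real.exp (-(r / R)) * ∑ j ∈ range (T.sup k + 1),
          (#(T.filter fun y => k y = j) : ℝ) * Real.exp (-j) := by
        rw [← mul_sum, ← sum_fiberwise_of_maps_to (g := k)
          fun y hy => mem_range.2 (Nat.lt_succ_of_le (le_sup hy))]
        congr 1
        refine sum_congr rfl fun j _ => ?_
        rw [sum_congr rfl fun y hy => by rw [(mem_filter.1 hy).2], sum_const, nsmul_eq_mul]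
    _ ≤ Real.exp (-(r / R)) * ∑ j ∈ range (T.sup k + 1),
          C * (2 * D) ^ D * Real.exp (3 / 2 - D) * M ^ D * Real.exp (-(1 / 2)) ^ j := by
        exact mul_le_mul_of_nonneg_left (sum_le_sum fun j _ => hshell j) (Real.exp_pos _).le
    _ ≤ Real.exp (-(r / R)) * (C * (2 * D) ^ D * Real.exp (3 / 2 - D) * M ^ D * 3) := by
        rw [← mul_sum]
        gcongr
        exact geom_sum_exp_neg_half_le_three _
    _ = _ := by ring

lemma sum_mul_sum_le_of_sum_le {α : Type*} [DecidableEq α] {𝒵 : Finset (Finset α)}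
    {T : Finset α} (h𝒵 : ∀ Z ∈ 𝒵, Z ⊆ T) {a : Finset α → ℝ} {b : α → ℝ}
    (hb : ∀ z ∈ T, 0 ≤ b z) {F : ℝ} (hF : ∀ z ∈ T, ∑ Z ∈ 𝒵.filter (z ∈ ·), a Z ≤ F) :
    ∑ Z ∈ 𝒵, a Z * ∑ z ∈ Z, b z ≤ F * ∑ z ∈ T, b z :=
  calc ∑ Z ∈ 𝒵, a Z * ∑ z ∈ Z, b z = ∑ z ∈ T, (∑ Z ∈ 𝒵.filter (z ∈ ·), a Z) * b z := by
        simp only [mul_sum, sum_mul]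
        exact sum_comm' fun Z z => by
          simp only [mem_filter]
          exact ⟨fun h => ⟨⟨h.1, h.2⟩, h𝒵 Z h.1 h.2⟩, fun h => ⟨h.1.1, h.1.2⟩⟩
    _ ≤ ∑ z ∈ T, F * b z := sum_le_sum fun z hz => mul_le_mul_of_nonneg_right (hF z hz) (hb z hz)
    _ = F * ∑ z ∈ T, b z := (mul_sum _ _ _).symm

end VolumeGrowth

section Truncation

omit [CompleteSpace H]

variable {h : Finset Ω → H →L[ℂ] H} {R : ℝ}

lemma norm_hlt_le (Z : Finset Ω) : ‖hlt h R Z‖ ≤ ‖h Z‖ := by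
  unfold hlt
  split_ifs <;> simp

lemma fdiam_lt_of_hlt_ne_zero {Z : Finset Ω} (hZ : hlt h R Z ≠ 0) : fdiam Z < R := by
  by_contra hdiam
  exact hZ (if_neg hdiam)

lemma hlt_mem {𝓑 : Subalgebra ℂ (H →L[ℂ] H)} {Z : Finset Ω} (hZ : h Z ∈ 𝓑) : hlt h R Z ∈ 𝓑 := by
  unfold hlt
  split_ifs
  exacts [hZ, zero_mem _]

lemma hge_mem {𝓑 : Subalgebra ℂ (H →L[ℂ] H)} {Z : Finset Ω} (hZ : h Z ∈ 𝓑) : hge h R Z ∈ 𝓑 :=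
  sub_mem hZ (hlt_mem hZ)

lemma norm_hge (Z : Finset Ω) : ‖hge h R Z‖ = if R ≤ fdiam Z then ‖h Z‖ else 0 := by
  unfold hge hlt
  split_ifs with hlt hle hle'
  · linarith
  · simp
  · simp
  · exact absurd (not_lt.1 hlt) hle'

lemma sum_norm_hge_le [DecidableEq Ω] {Λ : Finset Ω} {𝒵 : Finset (Finset Ω)}
    (h𝒵 : 𝒵 ⊆ Λ.powerset) {z : Ω} {F : ℝ}
    (hF : ∑ Z ∈ Λ.powerset.filter (fun Z => z ∈ Z ∧ R ≤ fdiam Z), ‖h Z‖ ≤ F) :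
    ∑ Z ∈ 𝒵.filter (z ∈ ·), ‖hge h R Z‖ ≤ F := by
  simp only [norm_hge, ← sum_filter, filter_filter]
  refine (sum_le_sum_of_subset_of_nonneg (fun Z hZ => ?_) fun _ _ _ => norm_nonneg _).trans hF
  simp only [mem_filter] at hZ ⊢
  exact ⟨h𝒵 hZ.1, hZ.2⟩

lemma sum_norm_hge_mul_sum_le [DecidableEq Ω] {Λ N : Finset Ω} {b : Ω → ℝ} (hb : ∀ z, 0 ≤ b z)
    {F : ℝ} (hF : ∀ z ∈ Λ, ∑ Z ∈ Λ.powerset.filter (fun Z => z ∈ Z ∧ R ≤ fdiam Z), ‖h Z‖ ≤ F) :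
    ∑ Z ∈ Λ.powerset.filter (fun Z => Z ∩ N = ∅), ‖hge h R Z‖ * ∑ z ∈ Z, b z ≤
      F * ∑ z ∈ Λ \ N, b z := by
  refine sum_mul_sum_le_of_sum_le (fun Z hZ z hz => ?_) (fun z _ => hb z) fun z hz =>
    sum_norm_hge_le (filter_subset _ _) (hF z (mem_sdiff.1 hz).1)
  obtain ⟨hZΛ, hZN⟩ := mem_filter.1 hZ
  exact mem_sdiff.2 ⟨mem_powerset.1 hZΛ hz, fun hzN => by simpa [hZN] using mem_inter.2 ⟨hz, hzN⟩⟩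

end Truncation

lemma subset_nbhd {Λ X : Finset Ω} (hX : X ⊆ Λ) {r : ℝ} (hr : 0 ≤ r) : X ⊆ nbhd Λ X r :=
  fun x hx => mem_filter.2 ⟨hX hx, x, hx, by simpa using hr⟩

lemma lt_dist_of_mem_sdiff_nbhd [DecidableEq Ω] {Λ X : Finset Ω} {r : ℝ} {x z : Ω}
    (hz : z ∈ Λ \ nbhd Λ X r) (hx : x ∈ X) : r < dist x z := by
  simp only [nbhd, mem_sdiff, mem_filter, not_and, not_exists, not_le] at hz
  rw [dist_comm]
  exact hz.2 hz.1 x hx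

lemma isSelfAdjoint_hlt {h : Finset Ω → H →L[ℂ] H} {R : ℝ} {Z : Finset Ω}
    (hZ : IsSelfAdjoint (h Z)) : IsSelfAdjoint (hlt h R Z) := by
  unfold hlt
  split_ifs
  exacts [hZ, .zero _]

theorem norm_opComm_heis_hlt_le [DecidableEq Ω] {𝓐 : Finset Ω → Subalgebra ℂ (H →L[ℂ] H)}
    {Λ : Finset Ω} {h : Finset Ω → H →L[ℂ] H} {C₀ : ℝ}
    (hloc : ∀ S S' : Finset Ω, Disjoint S S' → ∀ a ∈ 𝓐 S, ∀ b ∈ 𝓐 S', a * b = b * a)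
    (hmem : ∀ Z ⊆ Λ, h Z ∈ 𝓐 Z) (hsa : ∀ Z, IsSelfAdjoint (h Z))
    (hC₀ : ∀ x ∈ Λ, ∑ y ∈ Λ, ∑ Z ∈ Λ.powerset.filter (fun Z => x ∈ Z ∧ y ∈ Z), ‖h Z‖ ≤ C₀)
    {X Z : Finset Ω} (hX : X ⊆ Λ) (hZ : Z ⊆ Λ) (hXZ : Disjoint X Z) {A : H →L[ℂ] H}
    (hA : A ∈ 𝓐 X) {R t : ℝ} (hR : 0 < R) (ht : 0 ≤ t) :
    ‖opComm (heis (Ham Λ (hlt h R)) t A) (hge h R Z)‖ ≤ 2 * ‖A‖ * #X *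
      Real.exp (2 * Real.exp 1 * C₀ * t) *
        (‖hge h R Z‖ * ∑ z ∈ Z, ∑ x ∈ X, Real.exp (-(dist x z / R))) := by
  refine (norm_opComm_heis_le_of_fdiam_lt hloc (fun Z hZ => hlt_mem (hmem Z hZ))
    (fun Z _ => isSelfAdjoint_hlt (hsa Z)) (hge_mem (hmem Z hZ)) hR
    (fun Z => fdiam_lt_of_hlt_ne_zero) (fun S hS => ?_) hX hA hXZ ht).trans_eq (by ring)
  exact (sum_le_sum fun Z _ => by gcongr; exact norm_hlt_le Z).trans
    (sum_touching_mul_card_le (fun Z => norm_nonneg _) hC₀ hS)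

lemma card_filter_dist_le [DecidableEq Ω] {V : ℝ → ℝ}
    (hfin : ∀ (x : Ω) (ρ : ℝ), 0 ≤ ρ → {y : Ω | dist x y ≤ ρ}.Finite)
    (hV : ∀ (x : Ω) (ρ : ℝ), 0 ≤ ρ → ({y : Ω | dist x y ≤ ρ}.ncard : ℝ) ≤ V ρ)
    (Λ : Finset Ω) (x : Ω) {ρ : ℝ} (hρ : 0 ≤ ρ) :
    (#(Λ.filter fun y => dist x y ≤ ρ) : ℝ) ≤ V ρ := by
  refine le_trans ?_ (hV x ρ hρ)
  rw [← Set.ncard_coe_finset]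
  exact_mod_cast Set.ncard_le_ncard (fun y hy => (mem_filter.1 (mem_coe.1 hy)).2) (hfin x ρ hρ)

lemma sum_sdiff_nbhd_sum_exp_neg_dist_le [DecidableEq Ω] {Λ X : Finset Ω} {C D : ℝ} (hC : 0 ≤ C)
    (hD : 0 < D)
    (hvol : ∀ x ρ, 0 ≤ ρ → (#(Λ.filter fun y => dist x y ≤ ρ) : ℝ) ≤ C * (1 + ρ) ^ D)
    {r R : ℝ} (hr : 0 ≤ r) (hR : 1 ≤ R) :
    ∑ z ∈ Λ \ nbhd Λ X r, ∑ x ∈ X, Real.exp (-(dist x z / R)) ≤ #X *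
      (3 * C * (2 * D) ^ D * Real.exp (3 / 2 - D) * max r R ^ D * Real.exp (-(r / R))) := by
  rw [sum_comm, ← nsmul_eq_mul, ← sum_const]
  refine sum_le_sum fun x hx => le_trans ?_ (sum_exp_neg_dist_div_le hC hD (hvol x) hr hR)
  refine sum_le_sum_of_subset_of_nonneg (fun z hz => ?_) fun _ _ _ => (Real.exp_pos _).le
  exact mem_filter.2 ⟨(mem_sdiff.1 hz).1, lt_dist_of_mem_sdiff_nbhd hz hx⟩

/-- **Lemma B.1** (bound on the third term of Lemma 3.1): under Assumption A and the volume
bound with constants `C`, `D`, there is `𝒞₂ > 0` depending only on `C` and `D` such that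
`Σ_{Z∩X̃_r = ∅} ‖[τ^{(<R)}_{t,Λ}(A), h_Z^{(≥R)}]‖
   ≤ 𝒞₂ ‖A‖ |X|² (max(r,R))^D R f(R) e^{vt − r/R}` with `v = 2eC₀`. -/
theorem statement_3 (C D : ℝ) (hC : 0 < C) (hD : 0 < D) :
    ∃ C₂ : ℝ, 0 < C₂ ∧
    ∀ (Ω : Type) (_ : MetricSpace Ω) (_ : Countable Ω) (_ : DecidableEq Ω)
      (H : Type) (_ : NormedAddCommGroup H) (_ : InnerProductSpace ℂ H) (_ : CompleteSpace H)
      (Λ : Finset Ω) (𝓐 : Finset Ω → Subalgebra ℂ (H →L[ℂ] H))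
      (h : Finset Ω → (H →L[ℂ] H)) (f g : ℝ → ℝ) (C₀ : ℝ)
      (X : Finset Ω) (A : H →L[ℂ] H) (t r R : ℝ),
      -- the local algebras
      (∀ S S' : Finset Ω, S ⊆ S' → 𝓐 S ≤ 𝓐 S') →
      (∀ S : Finset Ω, ∀ a ∈ 𝓐 S, star a ∈ 𝓐 S) →
      (∀ S S' : Finset Ω, Disjoint S S' → ∀ a ∈ 𝓐 S, ∀ b ∈ 𝓐 S', a * b = b * a) →
      (∀ Z : Finset Ω, Z ⊆ Λ → h Z ∈ 𝓐 Z) →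
      (∀ Z : Finset Ω, IsSelfAdjoint (h Z)) →
      -- Assumption A (i)
      (AntitoneOn f (Set.Ici 0)) → (∀ R', 0 ≤ R' → 0 ≤ f R') →
      (∀ R', 0 ≤ R' → ∀ x ∈ Λ,
        ∑ Z ∈ Λ.powerset.filter (fun Z => x ∈ Z ∧ R' ≤ fdiam Z), ‖h Z‖ ≤ f R') →
      -- Assumption A (ii)
      (∀ x ∈ Λ, ∑ y ∈ Λ,
        ∑ Z ∈ Λ.powerset.filter (fun Z => x ∈ Z ∧ y ∈ Z), ‖h Z‖ ≤ C₀) →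
      -- volume bound with constants C and D
      (MonotoneOn g (Set.Ici 0)) →
      (∀ (x : Ω) (ρ : ℝ), 0 ≤ ρ → ({y : Ω | dist x y ≤ ρ}).Finite) →
      (∀ (x : Ω) (ρ : ℝ), 0 ≤ ρ → (({y : Ω | dist x y ≤ ρ}).ncard : ℝ) ≤ g ρ) →
      (∀ ρ : ℝ, 0 ≤ ρ → g ρ ≤ C * (1 + ρ) ^ D) →
      X ⊆ Λ → A ∈ 𝓐 X → 0 ≤ t → 0 < r → 1 ≤ R →
      ∑ Z ∈ Λ.powerset.filter (fun Z => Z ∩ nbhd Λ X r = ∅),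
          ‖opComm (heis (Ham Λ (hlt h R)) t A) (hge h R Z)‖ ≤
        C₂ * ‖A‖ * (X.card : ℝ) ^ 2 * max r R ^ D * R * f R *
          Real.exp (2 * Real.exp 1 * C₀ * t - r / R) := by
  refine ⟨2 * (3 * C * (2 * D) ^ D * Real.exp (3 / 2 - D)), by positivity, ?_⟩
  intro Ω _ _ _ H _ _ _ Λ 𝓐 h f g C₀ X A t r R _ _ hloc hmem hsa _ hf₀ hfR hC₀ _ hfin hg hgC hXΛ
    hA ht hr hR
  set K := 3 * C * (2 * D) ^ D * Real.exp (3 / 2 - D)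
  set v := 2 * Real.exp 1 * C₀ * t
  have hfR₀ : 0 ≤ f R := hf₀ R (by linarith)
  have hvol := fun x ρ hρ => (card_filter_dist_le hfin hg Λ x hρ).trans (hgC ρ hρ)
  calc ∑ Z ∈ Λ.powerset.filter (fun Z => Z ∩ nbhd Λ X r = ∅),
        ‖opComm (heis (Ham Λ (hlt h R)) t A) (hge h R Z)‖
      ≤ 2 * ‖A‖ * #X * Real.exp v * ∑ Z ∈ Λ.powerset.filter (fun Z => Z ∩ nbhd Λ X r = ∅),
          ‖hge h R Z‖ * ∑ z ∈ Z, ∑ x ∈ X, Real.exp (-(dist x z / R)) := by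
        rw [mul_sum]
        refine sum_le_sum fun Z hZ => ?_
        obtain ⟨hZΛ, hZN⟩ := mem_filter.1 hZ
        refine norm_opComm_heis_hlt_le hloc hmem hsa hC₀ hXΛ (mem_powerset.1 hZΛ) ?_ hA
          (by linarith) ht
        exact (disjoint_iff_inter_eq_empty.2 hZN).symm.mono_left (subset_nbhd hXΛ hr.le)
    _ ≤ 2 * ‖A‖ * #X * Real.exp v * (f R * (#X * (K * max r R ^ D * Real.exp (-(r / R))))) := by
        gcongr
        refine (sum_norm_hge_mul_sum_le (fun z => sum_nonneg fun x _ => (Real.exp_pos _).le)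
          (hfR R (by linarith))).trans (mul_le_mul_of_nonneg_left ?_ hfR₀)
        exact sum_sdiff_nbhd_sum_exp_neg_dist_le hC.le hD hvol hr.le hR
    _ = (2 * K * ‖A‖ * #X ^ 2 * max r R ^ D * f R * Real.exp (v - r / R)) * 1 := by
        rw [sub_eq_add_neg, Real.exp_add]
        ring
    _ ≤ (2 * K * ‖A‖ * #X ^ 2 * max r R ^ D * f R * Real.exp (v - r / R)) * R := by
        have := Real.rpow_nonneg (hr.le.trans (le_max_left r R)) D
        gcongr
    _ = _ := by ring
end
end

section
/- Let (Ω, d) be a metric space and suppose there are constants C > 0 and D > 0 with #{z ∈ Ω : d(x,z) ≤ ρ} ≤ C(1+ρ)^D for all x ∈ Ω and ρ ≥ 0. Then there is a constant C₃ > 0, depending only on C and D, such that for every x ∈ Ω, every r > 0 and every R ≥ 1: Σ_{k=0}^∞ #{z ∈ Ω : d(x,z) ≤ r+k+1} · e^{−(r+k)/R} ≤ C₃ (max(r,R))^D R e^{−r/R}. -/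
/-!
Bound the ball of radius `r + k + 1` by `C (3 max(r, R))^D (1 + k/R)^D`. Since `t ≤ e^t`, the
polynomial factor `(1 + k/R)^D` is at most `(2D)^D e^{(1 + k/R)/2}`, which eats only half of the
decay `e^{-k/R}`; what is left is a geometric series with ratio `e^{-1/(2R)}`, whose sum is at
most `1 + 2R ≤ 3R`.
-/

open Real

lemma rpow_le_mul_exp_mul {s c D : ℝ} (hs : 0 ≤ s) (hc : 0 < c) (hD : 0 < D) :
    s ^ D ≤ (D / c) ^ D * exp (c * s) := by
  have key : c * s / D ≤ exp (c * s / D) := by linarith [add_one_le_exp (c * s / D)]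
  calc s ^ D = (D / c) ^ D * (c * s / D) ^ D := by
        rw [← mul_rpow (by positivity) (by positivity)]; congr 1; field_simp
    _ ≤ (D / c) ^ D * exp (c * s / D) ^ D := by gcongr
    _ = (D / c) ^ D * exp (c * s) := by rw [← exp_mul]; congr 2; field_simp

lemma hasSum_exp_neg_nat_mul {a : ℝ} (ha : 0 < a) :
    HasSum (fun k : ℕ ↦ exp (-(k * a))) (1 - exp (-a))⁻¹ := by
  convert hasSum_geometric_of_lt_one (exp_pos (-a)).le (exp_lt_one_iff.mpr (neg_lt_zero.mpr ha))
    using 2 with k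
  rw [← exp_nat_mul]; ring_nf

lemma inv_one_sub_exp_neg_le {a : ℝ} (ha : 0 < a) : (1 - exp (-a))⁻¹ ≤ 1 + a⁻¹ := by
  have hexp : exp (-a) ≤ (1 + a)⁻¹ := by
    rw [exp_neg]; exact inv_anti₀ (by positivity) (by linarith [add_one_le_exp a])
  have hgap : a / (1 + a) ≤ 1 - exp (-a) := by
    have : a / (1 + a) = 1 - (1 + a)⁻¹ := by field_simp; ring
    linarith
  calc (1 - exp (-a))⁻¹ ≤ (a / (1 + a))⁻¹ := inv_anti₀ (by positivity) hgap
    _ = 1 + a⁻¹ := by field_simp; ring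

section GrowthBound

variable {N : ℝ → ℝ} {C D r R : ℝ}

lemma one_add_le_three_mul_max_mul (k : ℕ) (hR : 1 ≤ R) :
    1 + (r + k + 1) ≤ 3 * max r R * (1 + k / R) := by
  have hM : R ≤ max r R := le_max_right r R
  have hk : (k : ℝ) ≤ max r R * (k / R) := by
    rw [mul_div_assoc', le_div_iff₀ (by linarith)]
    rw [mul_comm]; exact mul_le_mul_of_nonneg_right hM k.cast_nonneg
  nlinarith [le_max_left r R, div_nonneg k.cast_nonneg (by linarith : (0 : ℝ) ≤ R)]

lemma mul_exp_neg_le_of_le_rpow (hN : ∀ ρ, 0 ≤ ρ → N ρ ≤ C * (1 + ρ) ^ D) (hC : 0 ≤ C)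
    (hD : 0 < D) (hr : 0 ≤ r) (hR : 1 ≤ R) (k : ℕ) :
    N (r + k + 1) * exp (-(r + k) / R) ≤
      C * (6 * D) ^ D * exp (1 / 2) * max r R ^ D * exp (-r / R) * exp (-(k * (2 * R)⁻¹)) := by
  have hR0 : 0 < R := by linarith
  have hM0 : 0 ≤ max r R := hR0.le.trans (le_max_right r R)
  have hpoly : (1 + k / R) ^ D ≤ (2 * D) ^ D * exp ((1 + k / R) / 2) := by
    have := rpow_le_mul_exp_mul (s := 1 + k / R) (by positivity) one_half_pos hD
    rwa [div_div_eq_mul_div, div_one, mul_comm D, one_div_mul_eq_div] at this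
  have hexp : exp ((1 + k / R) / 2) * exp (-(r + k) / R) =
      exp (1 / 2) * exp (-r / R) * exp (-(k * (2 * R)⁻¹)) := by
    simp only [← exp_add]; congr 1; field_simp; ring
  calc N (r + k + 1) * exp (-(r + k) / R)
      ≤ C * (3 * max r R * (1 + k / R)) ^ D * exp (-(r + k) / R) := by
        gcongr
        refine (hN _ (by positivity)).trans ?_
        gcongr
        exact one_add_le_three_mul_max_mul k hR
    _ = C * (3 * max r R) ^ D * (1 + k / R) ^ D * exp (-(r + k) / R) := by
        rw [mul_rpow (by positivity) (by positivity)]; ring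
    _ ≤ C * (3 * max r R) ^ D * ((2 * D) ^ D * exp ((1 + k / R) / 2)) * exp (-(r + k) / R) := by
        gcongr
    _ = C * ((2 * D) ^ D * (3 * max r R) ^ D) *
          (exp ((1 + k / R) / 2) * exp (-(r + k) / R)) := by ring
    _ = C * (6 * D) ^ D * exp (1 / 2) * max r R ^ D * exp (-r / R) * exp (-(k * (2 * R)⁻¹)) := by
        rw [hexp, ← mul_rpow (by positivity) (by positivity),
          show 2 * D * (3 * max r R) = 6 * D * max r R by ring, mul_rpow (by positivity) hM0]
        ring

theorem tsum_mul_exp_neg_le_of_le_rpow (hN0 : ∀ ρ, 0 ≤ N ρ)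
    (hN : ∀ ρ, 0 ≤ ρ → N ρ ≤ C * (1 + ρ) ^ D) (hD : 0 < D) (hr : 0 ≤ r) (hR : 1 ≤ R) :
    ∑' k : ℕ, N (r + k + 1) * exp (-(r + k) / R) ≤
      3 * C * (6 * D) ^ D * exp (1 / 2) * max r R ^ D * R * exp (-r / R) := by
  have hC : 0 ≤ C := by simpa using (hN0 0).trans (hN 0 le_rfl)
  have hR0 : 0 < R := by linarith
  set K := C * (6 * D) ^ D * exp (1 / 2) * max r R ^ D * exp (-r / R)
  have hK : 0 ≤ K := by positivity
  have hgeom := (hasSum_exp_neg_nat_mul (inv_pos.mpr (mul_pos two_pos hR0))).mul_left K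
  have hterm := mul_exp_neg_le_of_le_rpow hN hC hD hr hR
  have hsum : Summable fun k : ℕ ↦ N (r + k + 1) * exp (-(r + k) / R) :=
    hgeom.summable.of_nonneg_of_le (fun k ↦ mul_nonneg (hN0 _) (exp_pos _).le) hterm
  calc ∑' k : ℕ, N (r + k + 1) * exp (-(r + k) / R)
      ≤ K * (1 - exp (-(2 * R)⁻¹))⁻¹ := hasSum_le hterm hsum.hasSum hgeom
    _ ≤ K * (1 + 2 * R) := by
        gcongr
        simpa using inv_one_sub_exp_neg_le (inv_pos.mpr (mul_pos two_pos hR0))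
    _ ≤ K * (3 * R) := by gcongr; linarith
    _ = 3 * C * (6 * D) ^ D * exp (1 / 2) * max r R ^ D * R * exp (-r / R) := by ring

end GrowthBound

/-- The elementary computation (B.1): if `#{z : d(x,z) ≤ ρ} ≤ C(1+ρ)^D`, then there is
`C₃ > 0` depending only on `C` and `D` such that for `r > 0` and `R ≥ 1`,
`Σ_{k=0}^∞ #{z : d(x,z) ≤ r+k+1} e^{−(r+k)/R} ≤ C₃ (max(r,R))^D R e^{−r/R}`. -/
theorem statement_12 (C D : ℝ) (hC : 0 < C) (hD : 0 < D) :
    ∃ C₃ : ℝ, 0 < C₃ ∧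
    ∀ (Ω : Type) (_ : MetricSpace Ω) (_ : Countable Ω),
      (∀ (x : Ω) (ρ : ℝ), 0 ≤ ρ → ({z : Ω | dist x z ≤ ρ}).Finite) →
      (∀ (x : Ω) (ρ : ℝ), 0 ≤ ρ →
        (({z : Ω | dist x z ≤ ρ}).ncard : ℝ) ≤ C * (1 + ρ) ^ D) →
      ∀ (x : Ω) (r R : ℝ), 0 < r → 1 ≤ R →
        ∑' k : ℕ,
            (({z : Ω | dist x z ≤ r + k + 1}).ncard : ℝ) *
              Real.exp (-(r + k) / R) ≤
          C₃ * max r R ^ D * R * Real.exp (-r / R) := by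
  refine ⟨3 * C * (6 * D) ^ D * exp (1 / 2), by positivity, ?_⟩
  intro Ω _ _ _ hcard x r R hr hR
  exact tsum_mul_exp_neg_le_of_le_rpow (fun _ ↦ Nat.cast_nonneg _) (hcard x) hD hr.le hR
end
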